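/- arXiv:1709.02839 — 7 statements merged into one kernel-verified Lean document; each statement's English description precedes it below -/
import Mathlib

section
/- Let ς ∈ ℝⁿ with ς₁ < ς₂ < … < ς_n, and for θ ∈ Θ set c_θ = (∏_{k=1}^{|θ|} m_{θ_k})·(∏_{k=1}^{|θ|−1} (ς_{i_k+1} − ς_{i_k})), where i_k = max θ_k. Then for every θ ∈ Θ, the vector b^θ := (1/c_θ)·Σ_{θ̃∈Θ : θ∈∂θ̃} c_{θ̃}·b^{θ̃,θ} satisfies b^θ = ς − P_θ ς. -/
open MeasureTheory Set Finset

noncomputable section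

attribute [local instance] Classical.propDecidable

/-!
An ordered partition `θ ∈ Θ` of `[n] = {0,…,n−1}` into blocks of consecutive
integers is encoded by its set of cut points `S ⊆ {1,…,n−1}`:
indices `i, j` lie in the same block iff no cut separates them, i.e. iff
`∀ c ∈ S, (c ≤ i ↔ c ≤ j)`.  The number of blocks is `|θ| = S.card + 1`.
-/

/-- the block of the partition (encoded by the cut set `S`) containing `i`. -/
def block (n : ℕ) (S : Finset ℕ) (i : Fin n) : Finset (Fin n) :=
  univ.filter fun j => ∀ c ∈ S, (c ≤ (i : ℕ) ↔ c ≤ (j : ℕ))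

/-- `m_{θ_k}`: the mass of the block containing `i`. -/
def blockMassAt (n : ℕ) (m : Fin n → ℝ) (S : Finset ℕ) (i : Fin n) : ℝ :=
  ∑ j ∈ block n S i, m j

/-- The vector `b^{θ̃,θ}` where `θ̃` is encoded by the cut set `S` (with `c ∈ S`)
and `θ` is obtained from `θ̃` by merging the two blocks adjacent to the cut `c`:
its `i`-th entry is `−1/m_{θ̃_k}` on the block left of `c`, `1/m_{θ̃_{k+1}}` on the
block right of `c`, and `0` otherwise. -/
def bvec (n : ℕ) (m : Fin n → ℝ) (S : Finset ℕ) (c : ℕ) (i : Fin n) : ℝ :=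
  if hc : 0 < c ∧ c < n then
    if (∀ d ∈ S, (d ≤ (i : ℕ) ↔ d ≤ c - 1)) then
      -1 / blockMassAt n m S ⟨c - 1, by omega⟩
    else if (∀ d ∈ S, (d ≤ (i : ℕ) ↔ d ≤ c)) then
      1 / blockMassAt n m S ⟨c, hc.2⟩
    else 0
  else 0

/-- index (in `Fin (S.card + 1)`) of the block containing `j`. -/
def blockIdx (n : ℕ) (S : Finset ℕ) (j : Fin n) : Fin (S.card + 1) :=
  ⟨(S.filter fun c => c ≤ (j : ℕ)).card, Nat.lt_succ_of_le (Finset.card_filter_le _ _)⟩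

/-- `m_{θ_k}`: the mass of the `k`-th block. -/
def bmass (n : ℕ) (m : Fin n → ℝ) (S : Finset ℕ) (k : Fin (S.card + 1)) : ℝ :=
  ∑ j ∈ univ.filter (fun j => blockIdx n S j = k), m j

/-- `R_θ^{-1} : E^{|θ|} → Eⁿ`, assigning to each index its block value. -/
def extMap (n : ℕ) (S : Finset ℕ) (y : Fin (S.card + 1) → ℝ) : Fin n → ℝ :=
  fun j => y (blockIdx n S j)

/-- `P_θ`: block-averaging operator, `(P_θ x)_i = (1/m_{θ_k}) Σ_{j∈θ_k} m_j x_j`. -/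
def Pmat (n : ℕ) (m : Fin n → ℝ) (S : Finset ℕ) (x : Fin n → ℝ) (i : Fin n) : ℝ :=
  (∑ j ∈ block n S i, m j * x j) / blockMassAt n m S i

/-- `ς` evaluated at a natural index (junk `0` out of range). -/
def sigAt (n : ℕ) (ς : Fin n → ℝ) (c : ℕ) : ℝ := if h : c < n then ς ⟨c, h⟩ else 0

/-- the constants `c_θ = (∏_k m_{θ_k}) ∏_{k=1}^{|θ|−1} (ς_{i_k+1} − ς_{i_k})`
(`i_k = max θ_k`); in cut-set language the second product is over the cuts `c ∈ S`
and the `k`-th factor reads `ς_c − ς_{c−1}` (`0`-based indexing). -/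
def cSigma (n : ℕ) (m : Fin n → ℝ) (ς : Fin n → ℝ) (S : Finset ℕ) : ℝ :=
  (∏ i ∈ univ.filter (fun i : Fin n => (i : ℕ) = 0 ∨ (i : ℕ) ∈ S), blockMassAt n m S i) *
  ∏ c ∈ S, (sigAt n ς c - sigAt n ς (c - 1))

/-- `b^θ = (1/c_θ) Σ_{θ̃ : θ ∈ ∂θ̃} c_{θ̃} b^{θ̃,θ}`; the partitions `θ̃` with
`θ ∈ ∂θ̃` are exactly those obtained from `θ` by inserting one extra cut. -/
def bS (n : ℕ) (m : Fin n → ℝ) (ς : Fin n → ℝ) (S : Finset ℕ) (i : Fin n) : ℝ :=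
  (1 / cSigma n m ς S) *
    ∑ c ∈ Finset.Ioo 0 n \ S, cSigma n m ς (insert c S) * bvec n m (insert c S) c i

/-!
Inserting a cut `c` into the block `B ∋ i` splits it into `L` (left of `c`) and `R`, and
`c_{θ̃} m_B = c_θ m_L m_R (ς_c - ς_{c-1})`. Hence `c_{θ̃} b^{θ̃,θ}_i / c_θ` equals
`(ς_c - ς_{c-1}) m_L / m_B` for `i ∈ R` and `-(ς_c - ς_{c-1}) m_R / m_B` for `i ∈ L`, that is
`(ς_c - ς_{c-1}) Σ_{j ∈ B} m_j ([c ≤ i] - [c ≤ j]) / m_B`, and it vanishes when `c ∉ B`.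
Exchanging the sums over `c` and `j`, the sum over `c` telescopes to `ς_i - ς_j`, and
`Σ_{j ∈ B} m_j (ς_i - ς_j) / m_B = ς_i - (P_θ ς)_i`.
-/

section Blocks

variable {n : ℕ} {S : Finset ℕ}

lemma mem_block {i j : Fin n} : j ∈ block n S i ↔ ∀ d ∈ S, (d ≤ (i : ℕ) ↔ d ≤ (j : ℕ)) := by
  simp [block]

lemma mem_block_self (i : Fin n) : i ∈ block n S i :=
  mem_block.2 fun _ _ => Iff.rfl

lemma mem_block_comm {i j : Fin n} : j ∈ block n S i ↔ i ∈ block n S j := by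
  simp only [mem_block]
  exact forall₂_congr fun _ _ => Iff.comm

lemma block_eq_of_mem {i j : Fin n} (h : j ∈ block n S i) : block n S j = block n S i := by
  ext k
  simp only [mem_block] at h ⊢
  exact forall₂_congr fun d hd => by rw [h d hd]

lemma blockMassAt_eq_of_mem {m : Fin n → ℝ} {i j : Fin n} (h : j ∈ block n S i) :
    blockMassAt n m S j = blockMassAt n m S i := by
  rw [blockMassAt, blockMassAt, block_eq_of_mem h]

lemma blockMassAt_pos {m : Fin n → ℝ} (hm : ∀ i, 0 < m i) (S : Finset ℕ) (i : Fin n) :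
    0 < blockMassAt n m S i :=
  Finset.sum_pos (fun j _ => hm j) ⟨i, mem_block_self i⟩

lemma block_insert_of_not_mem {c : ℕ} (hc : c < n) {r : Fin n}
    (h : (⟨c, hc⟩ : Fin n) ∉ block n S r) : block n (insert c S) r = block n S r := by
  simp only [mem_block, not_forall] at h
  obtain ⟨d, hd, hdc⟩ := h
  ext j
  simp only [mem_block, Finset.forall_mem_insert]
  refine ⟨fun hj => hj.2, fun hj => ⟨?_, hj⟩⟩
  have := hj d hd
  omega

lemma block_insert_pred {c : ℕ} (hc0 : 0 < c) (hcn : c < n) (hcS : c ∉ S) :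
    block n (insert c S) ⟨c - 1, by omega⟩ =
      (block n S ⟨c, hcn⟩).filter fun j : Fin n => (j : ℕ) < c := by
  ext j
  simp only [mem_block, Finset.mem_filter, Finset.forall_mem_insert]
  refine ⟨fun ⟨hjc, hj⟩ => ⟨fun d hd => ?_, by omega⟩, fun ⟨hj, hjc⟩ => ⟨by omega, fun d hd => ?_⟩⟩
  all_goals
    have := hj d hd
    have : d ≠ c := fun e => hcS (e ▸ hd)
    omega

lemma block_insert_self {c : ℕ} (hcn : c < n) :
    block n (insert c S) ⟨c, hcn⟩ = (block n S ⟨c, hcn⟩).filter fun j : Fin n => c ≤ (j : ℕ) := by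
  ext j
  simp only [mem_block, Finset.mem_filter, Finset.forall_mem_insert]
  exact ⟨fun ⟨hjc, hj⟩ => ⟨hj, by omega⟩, fun ⟨hj, hjc⟩ => ⟨by omega, hj⟩⟩

lemma bvec_eq (m : Fin n → ℝ) (T : Finset ℕ) {c : ℕ} (hc0 : 0 < c) (hcn : c < n) (i : Fin n) :
    bvec n m T c i =
      if ⟨c - 1, by omega⟩ ∈ block n T i then -1 / blockMassAt n m T ⟨c - 1, by omega⟩
      else if ⟨c, hcn⟩ ∈ block n T i then 1 / blockMassAt n m T ⟨c, hcn⟩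
      else 0 := by
  simp only [bvec, dif_pos (And.intro hc0 hcn), mem_block]

-- `cSigma` is the product of the block masses over this set.
def blockStarts (n : ℕ) (S : Finset ℕ) : Finset (Fin n) :=
  univ.filter fun r : Fin n => (r : ℕ) = 0 ∨ (r : ℕ) ∈ S

lemma exists_blockStart_mem_block (i : Fin n) :
    ∃ a ∈ blockStarts n S, a ∈ block n S i ∧ a ≤ i := by
  set a := (insert 0 (S.filter fun d => d ≤ (i : ℕ))).max' (insert_nonempty _ _)
  have hmem := max'_mem (insert 0 (S.filter fun d => d ≤ (i : ℕ))) (insert_nonempty _ _)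
  have hai : a ≤ i := max'_le _ _ _ fun y hy => by
    simp only [Finset.mem_insert, Finset.mem_filter] at hy
    omega
  refine ⟨⟨a, by omega⟩, ?_, mem_block.2 fun d hd => ⟨fun h => ?_, fun h => h.trans hai⟩, hai⟩
  · simp only [Finset.mem_insert, Finset.mem_filter] at hmem
    simp only [blockStarts, Finset.mem_filter, Finset.mem_univ, true_and]
    tauto
  · exact le_max' _ _ (by simp [hd, h])

lemma eq_of_mem_block_of_mem_blockStarts {a b : Fin n} (ha : a ∈ blockStarts n S)
    (hb : b ∈ blockStarts n S) (hab : b ∈ block n S a) : b = a := by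
  simp only [blockStarts, Finset.mem_filter, Finset.mem_univ, true_and] at ha hb
  rw [mem_block] at hab
  ext
  rcases ha with ha | ha <;> rcases hb with hb | hb
  · omega
  · have := hab _ hb; omega
  · have := hab _ ha; omega
  · have := hab _ ha; have := hab _ hb; omega

lemma blockStarts_insert {c : ℕ} (hcn : c < n) :
    blockStarts n (insert c S) = insert ⟨c, hcn⟩ (blockStarts n S) := by
  ext r
  simp only [blockStarts, Finset.mem_filter, Finset.mem_univ, true_and, Finset.mem_insert,
    Fin.ext_iff]
  tauto

end Blocks

section Constants

variable {n : ℕ} {m ς : Fin n → ℝ} {S : Finset ℕ}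

lemma cSigma_pos (hm : ∀ i, 0 < m i) (hς : StrictMono ς) (hS : S ⊆ Ioo 0 n) :
    0 < cSigma n m ς S := by
  refine mul_pos (prod_pos fun i _ => blockMassAt_pos hm S i) (prod_pos fun d hd => ?_)
  have hd' := Finset.mem_Ioo.1 (hS hd)
  rw [sigAt, sigAt, dif_pos hd'.2, dif_pos (by omega), sub_pos]
  exact hς (Fin.mk_lt_mk.2 (by omega))

lemma cSigma_insert_mul {c : ℕ} (hc0 : 0 < c) (hcn : c < n) (hcS : c ∉ S) :
    cSigma n m ς (insert c S) * blockMassAt n m S ⟨c, hcn⟩ =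
      cSigma n m ς S * (blockMassAt n m (insert c S) ⟨c - 1, by omega⟩ *
        blockMassAt n m (insert c S) ⟨c, hcn⟩) * (sigAt n ς c - sigAt n ς (c - 1)) := by
  obtain ⟨a, ha, hac, hale⟩ := exists_blockStart_mem_block (S := S) ⟨c, hcn⟩
  have hcnot : (⟨c, hcn⟩ : Fin n) ∉ blockStarts n S := by
    simp only [blockStarts, mem_filter, Finset.mem_univ, hcS, or_false, true_and]
    omega
  have hac' : (a : ℕ) < c := lt_of_le_of_ne hale fun h => hcnot ((Fin.ext h : a = ⟨c, hcn⟩) ▸ ha)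
  have hmass_a : blockMassAt n m S a = blockMassAt n m S ⟨c, hcn⟩ := blockMassAt_eq_of_mem hac
  have hmass_a' : blockMassAt n m (insert c S) a =
      blockMassAt n m (insert c S) ⟨c - 1, by omega⟩ := by
    refine blockMassAt_eq_of_mem ?_
    rw [block_insert_pred hc0 hcn hcS, Finset.mem_filter]
    exact ⟨hac, hac'⟩
  have hother : ∀ r ∈ (blockStarts n S).erase a,
      blockMassAt n m (insert c S) r = blockMassAt n m S r := by
    intro r hr
    obtain ⟨hra, hr⟩ := Finset.mem_erase.1 hr
    rw [blockMassAt, block_insert_of_not_mem hcn fun hcr => hra ?_, blockMassAt]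
    exact (eq_of_mem_block_of_mem_blockStarts hr ha (block_eq_of_mem hcr ▸ hac)).symm
  rw [cSigma, cSigma]
  change (∏ r ∈ blockStarts n (insert c S), _) * _ * _ =
    (∏ r ∈ blockStarts n S, _) * _ * _ * _
  rw [blockStarts_insert hcn, prod_insert hcnot, prod_insert hcS, ← mul_prod_erase _ _ ha,
    ← mul_prod_erase _ _ ha, prod_congr rfl hother, hmass_a, hmass_a']
  ring

end Constants

def crossing (i j c : ℕ) : ℝ :=
  (if c ≤ i then 1 else 0) - (if c ≤ j then 1 else 0)

section Telescoping

variable {n : ℕ}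

lemma sigAt_coe (ς : Fin n → ℝ) (i : Fin n) : sigAt n ς i = ς i := by
  simp [sigAt]

lemma sum_Ioc_sub_pred (f : ℕ → ℝ) (k : ℕ) :
    ∑ c ∈ Finset.Ioc 0 k, (f c - f (c - 1)) = f k - f 0 := by
  induction k with
  | zero => simp
  | succ k ih => rw [sum_Ioc_succ_top (Nat.zero_le k), ih, Nat.add_sub_cancel]; ring

lemma sum_Ioo_sigAt_sub_mul_ite (ς : Fin n → ℝ) (k : Fin n) :
    ∑ c ∈ Finset.Ioo 0 n, (sigAt n ς c - sigAt n ς (c - 1)) * (if c ≤ (k : ℕ) then 1 else 0) =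
      ς k - sigAt n ς 0 := by
  have hIoc : (Finset.Ioo 0 n).filter (fun c => c ≤ (k : ℕ)) = Finset.Ioc 0 (k : ℕ) := by
    ext c
    simp only [Finset.mem_filter, Finset.mem_Ioo, Finset.mem_Ioc]
    omega
  simp only [mul_ite, mul_one, mul_zero]
  rw [← sum_filter, hIoc, sum_Ioc_sub_pred, sigAt_coe]

lemma sum_sigAt_sub_mul_crossing {S : Finset ℕ} (ς : Fin n → ℝ) {i j : Fin n}
    (hj : j ∈ block n S i) :
    ∑ c ∈ Finset.Ioo 0 n \ S, (sigAt n ς c - sigAt n ς (c - 1)) * crossing i j c =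
      ς i - ς j := by
  rw [sum_subset sdiff_subset fun c hc hcS => ?_]
  · simp only [crossing, mul_sub, sum_sub_distrib, sum_Ioo_sigAt_sub_mul_ite]
    ring
  · -- a cut of `S` never lies between two indices of the same block
    have hcS : c ∈ S := by simpa [hc] using hcS
    rw [crossing, if_congr (mem_block.1 hj c hcS) rfl rfl, sub_self, mul_zero]

-- Blocks are intervals.
lemma sum_mul_crossing_of_not_mem {S : Finset ℕ} {m : Fin n → ℝ} {i : Fin n} {c : ℕ}
    (hc : c < n) (hci : (⟨c, hc⟩ : Fin n) ∉ block n S i) :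
    ∑ j ∈ block n S i, m j * crossing i j c = 0 := by
  refine sum_eq_zero fun j hj => ?_
  simp only [mem_block, not_forall] at hj hci
  obtain ⟨d, hd, hdc⟩ := hci
  have := hj d hd
  rw [crossing, if_congr (show c ≤ (i : ℕ) ↔ c ≤ (j : ℕ) by omega) rfl rfl, sub_self, mul_zero]

end Telescoping

section Drift

variable {n : ℕ} {m ς : Fin n → ℝ} {S : Finset ℕ}

lemma bvec_insert_of_not_mem {c : ℕ} (hc0 : 0 < c) (hcn : c < n) (hcS : c ∉ S) {i : Fin n}
    (hci : (⟨c, hcn⟩ : Fin n) ∉ block n S i) : bvec n m (insert c S) c i = 0 := by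
  have hL : (⟨c - 1, by omega⟩ : Fin n) ∉ block n (insert c S) i := fun h =>
    hci (mem_block_comm.1 (mem_filter.1 (block_insert_pred hc0 hcn hcS ▸ mem_block_comm.1 h)).1)
  have hR : (⟨c, hcn⟩ : Fin n) ∉ block n (insert c S) i := fun h =>
    hci (mem_block_comm.1 (mem_filter.1 (block_insert_self hcn ▸ mem_block_comm.1 h)).1)
  rw [bvec_eq m _ hc0 hcn, if_neg hL, if_neg hR]

lemma cSigma_insert_mul_bvec_of_mem (hm : ∀ i, 0 < m i) {c : ℕ} (hc0 : 0 < c) (hcn : c < n)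
    (hcS : c ∉ S) {i : Fin n} (hci : (⟨c, hcn⟩ : Fin n) ∈ block n S i) :
    cSigma n m ς (insert c S) * bvec n m (insert c S) c i =
      cSigma n m ς S / blockMassAt n m S i *
        ((sigAt n ς c - sigAt n ς (c - 1)) * ∑ j ∈ block n S i, m j * crossing i j c) := by
  have hpred := block_eq_of_mem hci ▸ block_insert_pred (S := S) hc0 hcn hcS
  have hself := block_eq_of_mem hci ▸ block_insert_self (S := S) hcn
  have hins := blockMassAt_eq_of_mem hci ▸ cSigma_insert_mul (m := m) (ς := ς) hc0 hcn hcS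
  have hsplit : blockMassAt n m S i = blockMassAt n m (insert c S) ⟨c - 1, by omega⟩ +
      blockMassAt n m (insert c S) ⟨c, hcn⟩ := by
    simp only [blockMassAt, hpred, hself, ← not_le]
    exact (sum_filter_not_add_sum_filter _ _ _).symm
  have hsum : ∑ j ∈ block n S i, m j * crossing i j c =
      (if c ≤ (i : ℕ) then 1 else 0) * blockMassAt n m S i -
        blockMassAt n m (insert c S) ⟨c, hcn⟩ := by
    simp only [crossing, mul_sub, sum_sub_distrib, mul_ite, mul_one, mul_zero, ← sum_filter,
      hself, blockMassAt, filter_const]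
    split_ifs <;> simp
  have hL : (⟨c - 1, by omega⟩ : Fin n) ∈ block n (insert c S) i ↔ ¬ c ≤ (i : ℕ) := by
    rw [mem_block_comm, hpred, mem_filter, not_le]
    exact and_iff_right (mem_block_self i)
  have hR : (⟨c, hcn⟩ : Fin n) ∈ block n (insert c S) i ↔ c ≤ (i : ℕ) := by
    rw [mem_block_comm, hself, mem_filter]
    exact and_iff_right (mem_block_self i)
  have hmL := blockMassAt_pos hm (insert c S) ⟨c - 1, by omega⟩
  have hmR := blockMassAt_pos hm (insert c S) ⟨c, hcn⟩
  rw [bvec_eq m _ hc0 hcn, hsum]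
  rw [hsplit] at hins ⊢
  by_cases hi : c ≤ (i : ℕ)
  · simp only [hL, hR, hi, not_true, if_false, if_true]
    field_simp
    linear_combination hins
  · simp only [hL, hR, hi, not_false_iff, if_false, if_true]
    field_simp
    linear_combination -hins

lemma cSigma_insert_mul_bvec (hm : ∀ i, 0 < m i) {c : ℕ} (hc : c ∈ Finset.Ioo 0 n \ S)
    (i : Fin n) :
    cSigma n m ς (insert c S) * bvec n m (insert c S) c i =
      cSigma n m ς S / blockMassAt n m S i *
        ((sigAt n ς c - sigAt n ς (c - 1)) * ∑ j ∈ block n S i, m j * crossing i j c) := by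
  obtain ⟨hc, hcS⟩ := Finset.mem_sdiff.1 hc
  obtain ⟨hc0, hcn⟩ := Finset.mem_Ioo.1 hc
  by_cases hci : (⟨c, hcn⟩ : Fin n) ∈ block n S i
  · exact cSigma_insert_mul_bvec_of_mem hm hc0 hcn hcS hci
  · rw [bvec_insert_of_not_mem hc0 hcn hcS hci, sum_mul_crossing_of_not_mem hcn hci]
    ring

lemma sub_Pmat (hm : ∀ i, 0 < m i) (S : Finset ℕ) (x : Fin n → ℝ) (i : Fin n) :
    x i - Pmat n m S x i = (∑ j ∈ block n S i, m j * (x i - x j)) / blockMassAt n m S i := by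
  have hB := (blockMassAt_pos hm S i).ne'
  rw [Pmat, eq_div_iff hB, sub_mul, div_mul_cancel₀ _ hB, blockMassAt, mul_sum,
    ← sum_sub_distrib]
  exact sum_congr rfl fun j _ => by ring

end Drift

theorem stmt_1_general (n : ℕ) (m : Fin n → ℝ)
    (hm : ∀ i, m i ∈ Set.Ioc (0:ℝ) 1)
    (ς : Fin n → ℝ) (hς : StrictMono ς)
    (S : Finset ℕ) (hS : S ⊆ Finset.Ioo 0 n) :
    ∀ i : Fin n, bS n m ς S i = ς i - Pmat n m S ς i := by
  intro i
  have hm' : ∀ j, 0 < m j := fun j => (hm j).1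
  have hcS := (cSigma_pos hm' hς hS).ne'
  have hswap : ∑ c ∈ Finset.Ioo 0 n \ S,
      (sigAt n ς c - sigAt n ς (c - 1)) * ∑ j ∈ block n S i, m j * crossing i j c =
      ∑ j ∈ block n S i, m j * (ς i - ς j) := by
    simp only [mul_sum]
    rw [sum_comm]
    refine sum_congr rfl fun j hj => ?_
    rw [← sum_sigAt_sub_mul_crossing ς hj, mul_sum]
    exact sum_congr rfl fun c _ => by ring
  rw [bS, sum_congr rfl fun c hc => cSigma_insert_mul_bvec hm' hc i, ← mul_sum, hswap,
    sub_Pmat hm' S ς i]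
  field_simp

/-- **Proposition 3.3, first part.** With the particular constants
`c_θ` built from a strictly increasing vector `ς`, the drift vector `b^θ`
equals `ς − P_θ ς` for every ordered partition `θ` (encoded by the cut set `S`). -/
theorem stmt_1 (n : ℕ) (hn : 0 < n) (m : Fin n → ℝ)
    (hm : ∀ i, m i ∈ Set.Ioc (0:ℝ) 1) (hmsum : ∑ i, m i = 1)
    (ς : Fin n → ℝ) (hς : StrictMono ς)
    (S : Finset ℕ) (hS : S ⊆ Finset.Ioo 0 n) :
    ∀ i : Fin n, bS n m ς S i = ς i - Pmat n m S ς i :=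
  stmt_1_general n m hm ς hς S hS

end
end

section
/- Let g ∈ L₂^↑ and let h ∈ L₂^↑ be a step function (♯h < ∞). Then pr_g h is also a step function; that is, the conditional expectation E(h | σ*(g)) on ([0,1], leb) has a version taking only finitely many values. -/
/-!
Extend `g` and `h` monotonically from `[0,1]` to `ℝ`; this changes them only on a `leb`-null set,
which changes neither the conditional expectation nor (up to null sets) the σ-algebra.
A step function `h` is the finite combination `∑ v • (1_{v ≤ h} - 1_{v < h})` of indicators of
upper sets. For an upper set `U` and monotone `G`, at most one level set `L` of `G` meets both `U`
and its complement: off `L`, `1_U` is already `σ(G)`-measurable, and on the atom `L` the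
conditional expectation is the constant `leb (U ∩ L) / leb L`. So each `E(1_U | σ(G))`, and hence
`E(h | σ(G))`, is a simple function of `G`.
-/

open MeasureTheory Set Filter

noncomputable section

/-- Lebesgue measure on `[0,1]`. -/
def leb : Measure ℝ := volume.restrict (Set.Icc (0:ℝ) 1)

instance : IsFiniteMeasure leb := Real.isFiniteMeasure_restrict_Icc 0 1

theorem IccExtend_domRestrict_ae_eq {β : Type*} {μ : Measure ℝ} {a b : ℝ} (hab : a ≤ b)
    (f : ℝ → β) : IccExtend hab ((Icc a b).domRestrict f) =ᵐ[μ.restrict (Icc a b)] f :=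
  (ae_restrict_mem measurableSet_Icc).mono fun _ hx => IccExtend_of_mem _ _ hx

section LevelSets

variable {α β : Type*} [LinearOrder α] [LinearOrder β] {G : α → β} {U : Set α}

theorem Monotone.preimage_upperClosure_image_eq (hG : Monotone G) (hU : IsUpperSet U)
    (hsat : ∀ x y, G x = G y → x ∈ U → y ∈ U) : G ⁻¹' upperClosure (G '' U) = U := by
  ext x
  refine ⟨?_, fun hx => ⟨G x, mem_image_of_mem G hx, le_rfl⟩⟩
  rintro ⟨_, ⟨u, hu, rfl⟩, hux⟩
  rcases le_total u x with hle | hle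
  · exact hU hle hu
  · exact hsat u x (le_antisymm hux (hG hle)) hu

theorem Monotone.diff_preimage_singleton_eq (hG : Monotone G) (hU : IsUpperSet U) {u y : α}
    (hu : u ∈ U) (hy : y ∉ U) (huy : G u = G y) : U \ G ⁻¹' {G u} = G ⁻¹' Ioi (G u) := by
  ext x
  simp only [Set.mem_sdiff, mem_preimage, mem_singleton_iff, mem_Ioi]
  refine ⟨fun ⟨hx, hne⟩ => lt_of_le_of_ne ?_ (Ne.symm hne),
    fun hlt => ⟨hU (hG.reflect_lt hlt).le hu, hlt.ne'⟩⟩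
  by_contra! hlt
  exact hy (hU (hG.reflect_lt (huy ▸ hlt)).le hx)

end LevelSets

section CondExp

variable {α β E : Type*} [MeasurableSpace α] {μ : Measure α} [mβ : MeasurableSpace β]
  {G : α → β}

theorem condExp_comap_congr_ae [NormedAddCommGroup E] [NormedSpace ℝ E] [CompleteSpace E]
    [IsFiniteMeasure μ] {g : α → β} (hg : Measurable g) (hG : Measurable G)
    (hgG : g =ᵐ[μ] G) (f : α → E) : μ[f | mβ.comap g] =ᵐ[μ] μ[f | mβ.comap G] := by
  by_cases hf : Integrable f μ
  swap
  · simp [condExp_of_not_integrable hf]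
  -- Doob–Dynkin: the conditional expectation given `G` is a function of `G`.
  obtain ⟨F, hF, hFG⟩ :=
    (stronglyMeasurable_condExp (m := mβ.comap G) (f := f) (μ := μ)).exists_eq_measurable_comp
  have hcomp : F ∘ g =ᵐ[μ] μ[f | mβ.comap G] :=
    (hgG.fun_comp F).trans (EventuallyEq.of_eq hFG.symm)
  refine (ae_eq_condExp_of_forall_setIntegral_eq hg.comap_le hf
    (fun s _ _ => (integrable_condExp.congr hcomp.symm).integrableOn) ?_
    (hF.comp_measurable (comap_measurable g)).aestronglyMeasurable).symm.trans hcomp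
  rintro _ ⟨B, hB, rfl⟩ -
  have hset : g ⁻¹' B =ᵐ[μ] G ⁻¹' B := hgG.preimage B
  calc ∫ x in g ⁻¹' B, F (g x) ∂μ = ∫ x in g ⁻¹' B, μ[f | mβ.comap G] x ∂μ :=
        integral_congr_ae (ae_restrict_of_ae hcomp)
    _ = ∫ x in G ⁻¹' B, μ[f | mβ.comap G] x ∂μ := setIntegral_congr_set hset
    _ = ∫ x in G ⁻¹' B, f x ∂μ := setIntegral_condExp hG.comap_le hf ⟨B, hB, rfl⟩
    _ = ∫ x in g ⁻¹' B, f x ∂μ := setIntegral_congr_set hset.symm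

variable [IsFiniteMeasure μ]

theorem condExp_indicator_preimage (hG : Measurable G) {W : Set β} (hW : MeasurableSet W) :
    μ[(G ⁻¹' W).indicator (1 : α → ℝ) | mβ.comap G] = (G ⁻¹' W).indicator 1 :=
  condExp_of_stronglyMeasurable hG.comap_le
    (measurable_const.indicator
      (measurableSet_preimage (comap_measurable G) hW)).stronglyMeasurable
    ((integrable_const 1).indicator (hG hW))

theorem condExp_indicator_of_subset_preimage_singleton [MeasurableSingletonClass β]
    (hG : Measurable G) {A : Set α} (hA : MeasurableSet A) {c : β} (hAc : A ⊆ G ⁻¹' {c}) :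
    μ[A.indicator 1 | mβ.comap G] =ᵐ[μ]
      (G ⁻¹' {c}).indicator fun _ => μ.real A / μ.real (G ⁻¹' {c}) := by
  have hL : MeasurableSet (G ⁻¹' {c}) := hG (measurableSet_singleton c)
  refine (ae_eq_condExp_of_forall_setIntegral_eq hG.comap_le ((integrable_const 1).indicator hA)
    (g := (G ⁻¹' {c}).indicator fun _ => μ.real A / μ.real (G ⁻¹' {c}))
    (fun s _ _ => ((integrable_const _).indicator hL).integrableOn) ?_
    ((measurable_const.indicator (measurableSet_singleton c)).comp
      (comap_measurable G)).aestronglyMeasurable).symm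
  rintro _ ⟨B, hB, rfl⟩ -
  rw [integral_indicator_const _ hL, integral_indicator_one hA, measureReal_restrict_apply hL,
    measureReal_restrict_apply hA, smul_eq_mul]
  by_cases hc : c ∈ B
  · have hLB : G ⁻¹' {c} ⊆ G ⁻¹' B := preimage_mono (singleton_subset_iff.2 hc)
    rw [inter_eq_left.2 hLB, inter_eq_left.2 (hAc.trans hLB), ← mul_div_assoc]
    exact mul_div_cancel_left_of_imp fun h0 => measureReal_mono_null hAc h0
  · have hLB : Disjoint (G ⁻¹' {c}) (G ⁻¹' B) := disjoint_singleton_left.2 hc |>.preimage G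
    rw [hLB.inter_eq, (hLB.mono_left hAc).inter_eq]
    simp

variable [LinearOrder α] [LinearOrder β] [TopologicalSpace β] [OrderClosedTopology β]
  [BorelSpace β]

theorem IsUpperSet.exists_condExp_indicator_eq_comp (hG : Monotone G) (hGm : Measurable G)
    {U : Set α} (hU : IsUpperSet U) (hUm : MeasurableSet U) :
    ∃ F : SimpleFunc β ℝ, μ[U.indicator 1 | mβ.comap G] =ᵐ[μ] F ∘ G := by
  by_cases hsat : ∀ x y, G x = G y → x ∈ U → y ∈ U
  · set W : Set β := ↑(upperClosure (G '' U))
    have hW : MeasurableSet W := (upperClosure (G '' U)).upper.ordConnected.measurableSet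
    refine ⟨(SimpleFunc.const β 1).restrict W, EventuallyEq.of_eq ?_⟩
    rw [SimpleFunc.coe_restrict _ hW, ← hG.preimage_upperClosure_image_eq hU hsat,
      condExp_indicator_preimage hGm hW]
    ext x
    exact indicator_comp_right (g := (1 : β → ℝ)) G
  push Not at hsat
  obtain ⟨u, y, huy, hu, hy⟩ := hsat
  set L := G ⁻¹' {G u}
  have hsplit :
      U.indicator (1 : α → ℝ) = (G ⁻¹' Ioi (G u)).indicator 1 + (U ∩ L).indicator 1 := by
    have hdisj : Disjoint (G ⁻¹' Ioi (G u)) (U ∩ L) :=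
      ((disjoint_singleton_right.2 (lt_irrefl (G u))).preimage G).mono_right inter_subset_right
    conv_lhs => rw [← sdiff_union_inter U L, hG.diff_preimage_singleton_eq hU hu hy huy]
    exact indicator_union_of_disjoint hdisj 1
  refine ⟨(SimpleFunc.const β 1).restrict (Ioi (G u)) +
    (SimpleFunc.const β (μ.real (U ∩ L) / μ.real L)).restrict {G u}, ?_⟩
  calc μ[U.indicator 1 | mβ.comap G]
      =ᵐ[μ] μ[(G ⁻¹' Ioi (G u)).indicator 1 | mβ.comap G] +
          μ[(U ∩ L).indicator 1 | mβ.comap G] := by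
        rw [hsplit]
        exact condExp_add ((integrable_const 1).indicator (hGm measurableSet_Ioi))
          ((integrable_const 1).indicator (hUm.inter (hGm (measurableSet_singleton _)))) _
    _ =ᵐ[μ] (G ⁻¹' Ioi (G u)).indicator 1 +
          L.indicator fun _ => μ.real (U ∩ L) / μ.real L :=
        (EventuallyEq.of_eq (condExp_indicator_preimage hGm measurableSet_Ioi)).add
          (condExp_indicator_of_subset_preimage_singleton hGm
            (hUm.inter (hGm (measurableSet_singleton _))) inter_subset_right)
    _ = _ := by
        ext x
        simp only [SimpleFunc.coe_add, SimpleFunc.coe_restrict _ measurableSet_Ioi,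
          SimpleFunc.coe_restrict _ (measurableSet_singleton _), Pi.add_apply,
          Function.comp_apply, SimpleFunc.coe_const]
        rw [← indicator_comp_right, ← indicator_comp_right]
        rfl

theorem exists_condExp_comap_eq_comp_of_monotone (hG : Monotone G) (hGm : Measurable G)
    {H : α → ℝ} (hH : Monotone H) (hHm : Measurable H) (hfin : (range H).Finite) :
    ∃ F : SimpleFunc β ℝ, μ[H | mβ.comap G] =ᵐ[μ] F ∘ G := by
  classical
  have hlevel : H = ∑ v ∈ hfin.toFinset,
      v • ({x | v ≤ H x}.indicator (1 : α → ℝ) - {x | v < H x}.indicator 1) := by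
    ext x
    rw [Finset.sum_apply, Finset.sum_eq_single (H x)]
    · simp
    · intro v _ hv
      rcases lt_or_gt_of_ne hv with hlt | hlt
      · simp [hlt, hlt.le]
      · simp [hlt.not_ge, hlt.not_gt]
    · simp
  rw [hlevel]
  refine Finset.sum_induction _
    (fun f => Integrable f μ ∧ ∃ F : SimpleFunc β ℝ, μ[f | mβ.comap G] =ᵐ[μ] F ∘ G)
    (fun f₁ f₂ ⟨hf₁, F₁, hF₁⟩ ⟨hf₂, F₂, hF₂⟩ =>
      ⟨hf₁.add hf₂, F₁ + F₂, (condExp_add hf₁ hf₂ _).trans (hF₁.add hF₂)⟩)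
    ⟨integrable_zero _ _ _, 0, by simp [condExp_zero]⟩ (fun v _ => ?_) |>.2
  have hUle : IsUpperSet {x | v ≤ H x} := fun a b hab ha => le_trans ha (hH hab)
  have hUlt : IsUpperSet {x | v < H x} := fun a b hab ha => lt_of_lt_of_le ha (hH hab)
  have hmle : MeasurableSet {x | v ≤ H x} := measurableSet_le measurable_const hHm
  have hmlt : MeasurableSet {x | v < H x} := measurableSet_lt measurable_const hHm
  obtain ⟨F₁, hF₁⟩ := hUle.exists_condExp_indicator_eq_comp (μ := μ) hG hGm hmle
  obtain ⟨F₂, hF₂⟩ := hUlt.exists_condExp_indicator_eq_comp (μ := μ) hG hGm hmlt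
  have hi₁ := (integrable_const (1 : ℝ)).indicator hmle (μ := μ)
  have hi₂ := (integrable_const (1 : ℝ)).indicator hmlt (μ := μ)
  refine ⟨(hi₁.sub hi₂).smul v, v • (F₁ - F₂), ?_⟩
  exact (condExp_smul v _ _).trans
    (((condExp_sub hi₁ hi₂ _).trans (hF₁.sub hF₂)).const_smul v)

end CondExp

theorem stmt_10_general (g h : ℝ → ℝ) (hg : MonotoneOn g (Set.Icc 0 1)) (hgm : Measurable g)
    (hh : MonotoneOn h (Set.Icc 0 1)) (hstep : (h '' Set.Icc 0 1).Finite) :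
    ∃ f : ℝ → ℝ, (f '' Set.Icc 0 1).Finite ∧
      leb[h | MeasurableSpace.comap g (borel ℝ)] =ᵐ[leb] f := by
  set G := IccExtend zero_le_one ((Icc (0:ℝ) 1).domRestrict g)
  set H := IccExtend zero_le_one ((Icc (0:ℝ) 1).domRestrict h)
  have hG : Monotone G := (monotoneOn_iff_monotone.mp hg).IccExtend _
  have hH : Monotone H := (monotoneOn_iff_monotone.mp hh).IccExtend _
  have hGg : G =ᵐ[leb] g := IccExtend_domRestrict_ae_eq zero_le_one g
  have hHh : H =ᵐ[leb] h := IccExtend_domRestrict_ae_eq zero_le_one h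
  obtain ⟨F, hF⟩ := exists_condExp_comap_eq_comp_of_monotone (μ := leb) hG hG.measurable hH
    hH.measurable (by rwa [IccExtend_range, range_domRestrict])
  refine ⟨F ∘ G, F.finite_range.subset
    ((image_subset_range _ _).trans (range_comp_subset_range _ _)), ?_⟩
  calc leb[h | MeasurableSpace.comap g (borel ℝ)]
      =ᵐ[leb] leb[h | MeasurableSpace.comap G (borel ℝ)] :=
        condExp_comap_congr_ae hgm hG.measurable hGg.symm h
    _ =ᵐ[leb] leb[H | MeasurableSpace.comap G (borel ℝ)] := condExp_congr_ae hHh.symm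
    _ =ᵐ[leb] F ∘ G := hF

/-- **Lemma 3.8.** For `g ∈ L₂^↑` and a step function `h ∈ L₂^↑`,
the conditional expectation `pr_g h = E(h | σ(g))` on `([0,1], leb)` has a version
taking only finitely many values. -/
theorem stmt_10 (g h : ℝ → ℝ) (hg : MonotoneOn g (Set.Icc 0 1)) (hgm : Measurable g)
    (hh : MonotoneOn h (Set.Icc 0 1)) (hstep : (h '' Set.Icc 0 1).Finite)
    (hh2 : MemLp h 2 leb) :
    ∃ f : ℝ → ℝ, (f '' Set.Icc 0 1).Finite ∧
      leb[h | MeasurableSpace.comap g (borel ℝ)] =ᵐ[leb] f :=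
  stmt_10_general g h hg hgm hh hstep

end
end

section
/- Let g ∈ D^↑ be square integrable. Then the following are equivalent: (a) there exists a σ(ξ)-measurable function f : [0,1] → ℝ with f = g Lebesgue-a.e. (i.e. g is σ*(ξ)-measurable as an element of L₂); (b) for all 0 ≤ a < b ≤ 1, ξ(a) = ξ(b) implies g(a) = g(b−). -/
open MeasureTheory Set Filter

noncomputable section

/-- The left limit of a monotone function at `b`, computed from its values on `[0, b)`
(`g(b−) = sup g([0,b))` for non-decreasing right-continuous `g`). -/
def leftLim01 (h : ℝ → ℝ) (b : ℝ) : ℝ := sSup (h '' Set.Ico 0 b)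

/-- `g` belongs to `D^↑`: it is non-decreasing on `[0,1]`, right-continuous at every
point of `[0,1)` and continuous at `1` (within `[0,1]`). -/
def IsDup (g : ℝ → ℝ) : Prop :=
  MonotoneOn g (Set.Icc 0 1) ∧
  (∀ s ∈ Set.Ico (0:ℝ) 1, Filter.Tendsto g (nhdsWithin s (Set.Icc s 1)) (nhds (g s))) ∧
  Filter.Tendsto g (nhdsWithin 1 (Set.Icc 0 1)) (nhds (g 1))

/-
`(a) ⇒ (b)`: a `σ(ξ)`-measurable `f` is constant on every level set of `ξ`, and the level set
`{ξ = ξ a}` contains `[a, b]`; so `g` is a.e. constant on `[a, b)`, and for a monotone,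
right-continuous `g` this forces `g a = g (b-)`.

`(b) ⇒ (a)`: with the generalised inverse `ξ⁻(y) = inf {s ∈ [0,1] | y ≤ ξ s}` take
`f = g ∘ ξ⁻ ∘ ξ`, which is `σ(ξ)`-measurable because `g ∘ ξ⁻` is monotone. Right-continuity of
`ξ` gives `ξ (ξ⁻ (ξ t)) = ξ t` and `ξ⁻ (ξ t) ≤ t`, so (b) yields `f t = g (t-)`, which equals
`g t` off the countably many jumps of `g`.
-/

open MeasureTheory Set Filter Topology

instance : NullSingletonClass leb :=
  inferInstanceAs (NullSingletonClass (volume.restrict (Icc (0:ℝ) 1)))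

lemma exists_mem_Ioo_of_ae_leb {P : ℝ → Prop} (h : ∀ᵐ t ∂leb, P t) {x y : ℝ} (hx : 0 ≤ x)
    (hxy : x < y) (hy : y ≤ 1) : ∃ t ∈ Ioo x y, P t := by
  have hpos : leb (Ioo x y) ≠ 0 := by
    rw [leb, Measure.restrict_apply measurableSet_Ioo,
      inter_eq_left.2 (Ioo_subset_Icc_self.trans (Icc_subset_Icc hx hy)), Real.volume_Ioo]
    simpa using hxy
  have : (ae (leb.restrict (Ioo x y))).NeBot := ae_neBot.2 (by simpa using hpos)
  exact ((ae_restrict_mem measurableSet_Ioo).and (ae_restrict_of_ae h)).exists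

section Monotone

variable {g : ℝ → ℝ}

lemma MonotoneOn.bddAbove_image_Ico_zero (hg : MonotoneOn g (Icc 0 1)) {b : ℝ} (hb : b ≤ 1) :
    BddAbove (g '' Ico 0 b) :=
  ⟨g 1, forall_mem_image.2 fun _ hs ↦
    hg ⟨hs.1, hs.2.le.trans hb⟩ ⟨zero_le_one, le_rfl⟩ (hs.2.le.trans hb)⟩

lemma le_leftLim01 (hg : MonotoneOn g (Icc 0 1)) {a b : ℝ} (ha : a ∈ Ico 0 b) (hb : b ≤ 1) :
    g a ≤ leftLim01 g b :=
  le_csSup (hg.bddAbove_image_Ico_zero hb) (mem_image_of_mem g ha)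

lemma leftLim01_eq_of_continuousWithinAt (hg : MonotoneOn g (Icc 0 1)) {t : ℝ}
    (ht : t ∈ Ioc 0 1) (hc : ContinuousWithinAt g (Icc 0 1) t) : leftLim01 g t = g t := by
  have hIco : Ico 0 t ⊆ Icc 0 1 := Ico_subset_Icc_self.trans (Icc_subset_Icc_right ht.2)
  have hsup : sSup (Ico 0 t) = t := csSup_Ico ht.1
  rw [leftLim01, ← hg.mono hIco |>.map_csSup_of_continuousWithinAt
    (by rw [hsup]; exact hc.mono hIco) (nonempty_Ico.2 ht.1) bddAbove_Ico, hsup]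

lemma ae_leftLim01_eq (hg : MonotoneOn g (Icc 0 1)) : ∀ᵐ t ∂leb, leftLim01 g t = g t := by
  have hjumps := hg.countable_not_continuousWithinAt.ae_notMem leb
  have hzero : ∀ᵐ t ∂leb, t ≠ 0 := by simpa using (countable_singleton (0 : ℝ)).ae_notMem leb
  filter_upwards [ae_restrict_mem measurableSet_Icc, hjumps, hzero] with t ht hcont ht0
  exact leftLim01_eq_of_continuousWithinAt hg ⟨ht.1.lt_of_ne' ht0, ht.2⟩
    (not_not.1 fun h ↦ hcont ⟨ht, h⟩)

lemma eq_leftLim01_of_ae_eq_const (hg : MonotoneOn g (Icc 0 1)) {a b c : ℝ}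
    (hrc : ContinuousWithinAt g (Icc a 1) a) (ha : 0 ≤ a) (hab : a < b) (hb : b ≤ 1)
    (hc : ∀ᵐ t ∂leb, t ∈ Ico a b → g t = c) : g a = leftLim01 g b := by
  have hdense : ∀ x y, a ≤ x → x < y → y ≤ b → ∃ t ∈ Ioo x y, g t = c := fun x y hx hxy hy ↦
    (exists_mem_Ioo_of_ae_leb hc (ha.trans hx) hxy (hy.trans hb)).imp
      fun t ht ↦ ⟨ht.1, ht.2 ⟨hx.trans ht.1.1.le, ht.1.2.trans_le hy⟩⟩
  have hgac : g a = c := by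
    refine tendsto_nhds_unique_of_frequently_eq hrc tendsto_const_nhds (frequently_iff.2 ?_)
    intro U hU
    obtain ⟨ε, hε, hball⟩ := Metric.mem_nhdsWithin_iff.1 hU
    obtain ⟨t, ht, hgt⟩ := hdense a (min (a + ε) b) le_rfl (lt_min (by linarith) hab)
      (min_le_right _ _)
    refine ⟨t, hball ⟨?_, ht.1.le, ht.2.le.trans ((min_le_right _ _).trans hb)⟩, hgt⟩
    rw [Metric.mem_ball, Real.dist_eq, abs_of_pos (sub_pos.2 ht.1)]
    linarith [ht.2.trans_le (min_le_left _ _)]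
  have hle : leftLim01 g b ≤ c := by
    refine csSup_le ((nonempty_Ico.2 hab).image g |>.mono (image_mono (Ico_subset_Ico_left ha)))
      (forall_mem_image.2 fun s hs ↦ ?_)
    obtain ⟨t, ht, hgt⟩ := hdense (max s a) b (le_max_right _ _) (max_lt hs.2 hab) le_rfl
    rw [← hgt]
    exact hg ⟨hs.1, hs.2.le.trans hb⟩ ⟨hs.1.trans ((le_max_left _ _).trans ht.1.le),
      ht.2.le.trans hb⟩ ((le_max_left _ _).trans ht.1.le)
  exact le_antisymm (le_leftLim01 hg ⟨ha, hab⟩ hb) (hle.trans hgac.ge)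

end Monotone

/-- Inserting `1` keeps the infimum away from the junk value `sInf ∅ = 0`, which would break
monotonicity. -/
def genInv (ξ : ℝ → ℝ) (y : ℝ) : ℝ := sInf (insert 1 {s ∈ Icc (0:ℝ) 1 | y ≤ ξ s})

section GenInv

variable {ξ : ℝ → ℝ}

lemma bddBelow_genInv_set (y : ℝ) : BddBelow (insert 1 {s ∈ Icc (0:ℝ) 1 | y ≤ ξ s}) :=
  ⟨0, forall_mem_insert.2 ⟨zero_le_one, fun _ hs ↦ hs.1.1⟩⟩

lemma genInv_mem_Icc (y : ℝ) : genInv ξ y ∈ Icc 0 1 :=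
  ⟨le_csInf (insert_nonempty _ _) (forall_mem_insert.2 ⟨zero_le_one, fun _ hs ↦ hs.1.1⟩),
    csInf_le (bddBelow_genInv_set y) (mem_insert _ _)⟩

lemma genInv_mono : Monotone (genInv ξ) := fun _ _ hyy' ↦
  csInf_le_csInf (bddBelow_genInv_set _) (insert_nonempty _ _)
    (insert_subset_insert fun _ hs ↦ ⟨hs.1, hyy'.trans hs.2⟩)

lemma genInv_apply_le {t : ℝ} (ht : t ∈ Icc 0 1) : genInv ξ (ξ t) ≤ t :=
  csInf_le (bddBelow_genInv_set _) (mem_insert_of_mem _ ⟨ht, le_rfl⟩)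

end GenInv

lemma StieltjesFunction.apply_genInv_apply (ξ : StieltjesFunction ℝ) {t : ℝ} (ht : t ∈ Icc 0 1) :
    ξ (genInv ξ (ξ t)) = ξ t := by
  set a := genInv ξ (ξ t)
  refine le_antisymm (ξ.mono (genInv_apply_le ht)) ?_
  have hright : ∀ s ∈ Ioi a, ξ t ≤ ξ s := fun s hs ↦ by
    obtain ⟨u, hu, hus⟩ :=
      exists_lt_of_csInf_lt (insert_nonempty 1 {s ∈ Icc (0:ℝ) 1 | ξ t ≤ ξ s}) hs
    rcases hu with rfl | ⟨-, hle⟩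
    · exact ξ.mono (ht.2.trans hus.le)
    · exact hle.trans (ξ.mono hus.le)
  exact ge_of_tendsto ((ξ.right_continuous a).mono Ioi_subset_Ici_self)
    (eventually_nhdsWithin_of_forall hright)

lemma eq_leftLim01_of_comap_measurable {ξ g f : ℝ → ℝ} (hξ : Monotone ξ)
    (hg : MonotoneOn g (Icc 0 1)) (hrc : ∀ s ∈ Ico (0:ℝ) 1, ContinuousWithinAt g (Icc s 1) s)
    (hf : Measurable[MeasurableSpace.comap ξ (borel ℝ)] f) (hfg : f =ᵐ[leb] g)
    {a b : ℝ} (ha : 0 ≤ a) (hab : a < b) (hb : b ≤ 1) (hξab : ξ a = ξ b) :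
    g a = leftLim01 g b := by
  have hconst : ∀ t ∈ Icc a b, f t = f a := fun t ht ↦
    hf.factorsThrough (le_antisymm (hξab ▸ hξ ht.2) (hξ ht.1))
  refine eq_leftLim01_of_ae_eq_const hg (hrc a ⟨ha, hab.trans_le hb⟩) ha hab hb (c := f a) ?_
  filter_upwards [hfg] with t ht htab
  rw [← ht, hconst t (Ico_subset_Icc_self htab)]

lemma exists_comap_measurable_ae_eq (ξ : StieltjesFunction ℝ) {g : ℝ → ℝ}
    (hg : MonotoneOn g (Icc 0 1))
    (h : ∀ a b : ℝ, 0 ≤ a → a < b → b ≤ 1 → ξ a = ξ b → g a = leftLim01 g b) :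
    ∃ f : ℝ → ℝ, Measurable[MeasurableSpace.comap ξ (borel ℝ)] f ∧ f =ᵐ[leb] g := by
  have hmono : Monotone (g ∘ genInv ξ) := fun _ _ hyy' ↦
    hg (genInv_mem_Icc _) (genInv_mem_Icc _) (genInv_mono hyy')
  refine ⟨g ∘ genInv ξ ∘ ξ, hmono.measurable.comp (comap_measurable ξ), ?_⟩
  filter_upwards [ae_restrict_mem measurableSet_Icc, ae_leftLim01_eq hg] with t ht hlim
  rcases (genInv_apply_le (ξ := ξ) ht).eq_or_lt with heq | hlt
  · simp only [Function.comp_apply, heq]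
  · rw [Function.comp_apply, Function.comp_apply,
      h _ t (genInv_mem_Icc _).1 hlt ht.2 (ξ.apply_genInv_apply ht), hlim]

theorem stmt_12_general (ξ : StieltjesFunction ℝ)
    (g : ℝ → ℝ) (hD : IsDup g) :
    (∃ f : ℝ → ℝ, Measurable[MeasurableSpace.comap ξ (borel ℝ)] f ∧ f =ᵐ[leb] g) ↔
    (∀ a b : ℝ, 0 ≤ a → a < b → b ≤ 1 → ξ a = ξ b → g a = leftLim01 g b) :=
  ⟨fun ⟨_, hf, hfg⟩ _ _ ↦ eq_leftLim01_of_comap_measurable ξ.mono hD.1 hD.2.1 hf hfg,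
    exists_comap_measurable_ae_eq ξ hD.1⟩

/-- **Proposition A.1.** A square-integrable `g ∈ D^↑` is
`σ*(ξ)`-measurable (has a `σ(ξ)`-measurable a.e. version) if and only if
`ξ(a) = ξ(b)` implies `g(a) = g(b−)` for all `0 ≤ a < b ≤ 1`. -/
theorem stmt_12 (ξ : StieltjesFunction ℝ)
    (hξ0 : ∀ x ≤ (0:ℝ), ξ x = ξ 0) (hξ1 : ∀ x, (1:ℝ) ≤ x → ξ x = ξ 1)
    (hξc : ContinuousAt ξ 1)
    (g : ℝ → ℝ) (hD : IsDup g) (hg2 : MemLp g 2 leb) :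
    (∃ f : ℝ → ℝ, Measurable[MeasurableSpace.comap ξ (borel ℝ)] f ∧ f =ᵐ[leb] g) ↔
    (∀ a b : ℝ, 0 ≤ a → a < b → b ≤ 1 → ξ a = ξ b → g a = leftLim01 g b) :=
  stmt_12_general ξ g hD
end
end

section
/- Let f ∈ C¹(ℝ^k). Then (i) the multivariate Bernstein polynomials Bₙ(f;·) converge uniformly to f on [0,1]^k as n → ∞; and (ii) for each i ∈ {1,…,k}, the partial derivatives ∂ᵢBₙ(f;·) converge uniformly to ∂ᵢf on [0,1]^k as n → ∞. -/
open Filter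

noncomputable section

/-- The multivariate Bernstein polynomial of order `n` of `f : [0,1]^k → ℝ`:
`Bₙ(f;x) = Σ_{j₁,…,j_k=0}^{n} f(j₁/n,…,j_k/n) ∏ᵢ C(n,jᵢ) xᵢ^{jᵢ} (1−xᵢ)^{n−jᵢ}`. -/
def bernsteinPoly (k : ℕ) (f : (Fin k → ℝ) → ℝ) (n : ℕ) (x : Fin k → ℝ) : ℝ :=
  ∑ j : Fin k → Fin (n + 1), f (fun i => (j i : ℝ) / n) *
    ∏ i, (n.choose (j i) : ℝ) * x i ^ (j i : ℕ) * (1 - x i) ^ (n - (j i : ℕ))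

/-!
`Bₙ(f;x)` averages `f` over the grid nodes `j/n` against a product of one-dimensional Bernstein
distributions, whose second moment about `x` is `O(1/n)` uniformly on the cube. For continuous
`g`, compactness gives `|g y - g x| ≤ ε + C ‖y - x‖²`, so every such average of values of `g`
taken within `1/n` of the nodes is uniformly within `ε + O(1/n)` of `g`.

Differentiating the Bernstein factor of coordinate `i` and summing by parts in `jᵢ` shows that
`∂ᵢBₙ(f;x)` is an average of the same kind, of degree `n - 1` in coordinate `i`, of the difference
quotients `n (f(j/n + eᵢ/n) - f(j/n))`; by the mean value theorem these are values of `∂ᵢf` at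
points within `1/n` of the nodes.
-/

open Finset Polynomial

lemma bernsteinPolynomial_eval_nonneg (n ν : ℕ) {y : ℝ} (hy : y ∈ Set.Icc (0 : ℝ) 1) :
    0 ≤ (bernsteinPolynomial ℝ n ν).eval y := by
  have : 0 ≤ 1 - y := sub_nonneg.2 hy.2
  simp only [bernsteinPolynomial, eval_mul, eval_pow, eval_natCast, eval_X, eval_sub, eval_one]
  exact mul_nonneg (mul_nonneg (Nat.cast_nonneg _) (pow_nonneg hy.1 _)) (pow_nonneg this _)

lemma sum_fin_mul_bernsteinPolynomial_eval_eq_sum_range {d n : ℕ} (hd : d ≤ n) (φ : ℕ → ℝ)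
    (y : ℝ) :
    ∑ a : Fin (n + 1), φ a * (bernsteinPolynomial ℝ d a).eval y =
      ∑ a ∈ range (d + 1), φ a * (bernsteinPolynomial ℝ d a).eval y := by
  rw [Fin.sum_univ_eq_sum_range (fun a => φ a * (bernsteinPolynomial ℝ d a).eval y)]
  refine (sum_subset (range_subset_range.2 (by omega)) fun a _ ha => ?_).symm
  rw [bernsteinPolynomial.eq_zero_of_lt ℝ (by simpa using ha), eval_zero, mul_zero]

lemma sum_range_bernsteinPolynomial_eval (d : ℕ) (y : ℝ) :
    ∑ a ∈ range (d + 1), (bernsteinPolynomial ℝ d a).eval y = 1 := by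
  simpa [eval_finsetSum] using congr_arg (eval y) (bernsteinPolynomial.sum ℝ d)

lemma sum_fin_bernsteinPolynomial_eval {d n : ℕ} (hd : d ≤ n) (y : ℝ) :
    ∑ a : Fin (n + 1), (bernsteinPolynomial ℝ d a).eval y = 1 := by
  simpa [sum_range_bernsteinPolynomial_eval] using
    sum_fin_mul_bernsteinPolynomial_eval_eq_sum_range hd (fun _ => 1) y

lemma sum_range_sq_mul_bernsteinPolynomial_eval (d : ℕ) (y : ℝ) :
    ∑ a ∈ range (d + 1), (d * y - a) ^ 2 * (bernsteinPolynomial ℝ d a).eval y =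
      d * y * (1 - y) := by
  simpa [eval_finsetSum] using congr_arg (eval y) (bernsteinPolynomial.variance ℝ d)

lemma sum_fin_sq_mul_bernsteinPolynomial_eval_le {d n : ℕ} (hd : d ≤ n) (hn : n ≤ d + 1)
    (hn0 : 0 < n) {y : ℝ} (hy : y ∈ Set.Icc (0 : ℝ) 1) :
    ∑ a : Fin (n + 1), ((a : ℝ) / n - y) ^ 2 * (bernsteinPolynomial ℝ d a).eval y ≤ 3 / n := by
  have hn1 : (1 : ℝ) ≤ n := by exact_mod_cast hn0
  have hdn : (d : ℝ) ≤ n := by exact_mod_cast hd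
  have hnd : (n : ℝ) ≤ d + 1 := by exact_mod_cast hn
  rw [sum_fin_mul_bernsteinPolynomial_eval_eq_sum_range hd (fun a : ℕ => ((a : ℝ) / n - y) ^ 2)]
  calc ∑ a ∈ range (d + 1), ((a : ℝ) / n - y) ^ 2 * (bernsteinPolynomial ℝ d a).eval y
      ≤ ∑ a ∈ range (d + 1),
          (2 * (d * y - a) ^ 2 + 2) / n ^ 2 * (bernsteinPolynomial ℝ d a).eval y := by
        gcongr with a
        · exact bernsteinPolynomial_eval_nonneg d a hy
        · have hshift : ((n - d) * y) ^ 2 ≤ 1 := by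
            rw [mul_pow]
            exact mul_le_one₀ (by nlinarith) (sq_nonneg y) (by nlinarith [hy.1, hy.2])
          rw [div_sub' (by positivity), div_pow, div_le_div_iff_of_pos_right (by positivity)]
          nlinarith [sq_nonneg (a - d * y + (n - d) * y)]
    _ = (2 * (d * y * (1 - y)) + 2 * 1) / n ^ 2 := by
        rw [← sum_range_sq_mul_bernsteinPolynomial_eval, ← sum_range_bernsteinPolynomial_eval d y,
          mul_sum, mul_sum, ← sum_add_distrib, sum_div]
        exact sum_congr rfl fun a _ => by ring
    _ ≤ 3 / n := by
        have : d * y * (1 - y) ≤ n / 4 := by nlinarith [sq_nonneg (2 * y - 1), hy.1, hy.2]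
        rw [div_le_div_iff₀ (by positivity) (by positivity)]
        nlinarith

/-- Addition in `Fin (n + 1)` wraps `Fin.last n` around to `0`; the identity survives the wrap
because `bernsteinPolynomial ℝ (n - 1) n = 0` for `n ≠ 0`. -/
lemma derivative_bernsteinPolynomial_eval_add_one (n : ℕ) (a : Fin (n + 1)) (y : ℝ) :
    (derivative (bernsteinPolynomial ℝ n (a + 1 : Fin (n + 1)))).eval y =
      n * ((bernsteinPolynomial ℝ (n - 1) a).eval y -
        (bernsteinPolynomial ℝ (n - 1) (a + 1 : Fin (n + 1))).eval y) := by
  rw [Fin.val_add_one]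
  split_ifs with ha
  · rcases n with _ | n
    · simp [bernsteinPolynomial]
    · simp [ha, bernsteinPolynomial.derivative_zero,
        bernsteinPolynomial.eq_zero_of_lt ℝ (Nat.lt_succ_self n)]
      ring
  · simp [bernsteinPolynomial.derivative_succ]

lemma natCast_mul_bernsteinPolynomial_eval_pred_self (n : ℕ) (y : ℝ) :
    (n : ℝ) * (bernsteinPolynomial ℝ (n - 1) n).eval y = 0 := by
  rcases n with _ | n
  · simp
  · simp [bernsteinPolynomial.eq_zero_of_lt ℝ (Nat.lt_succ_self n)]

section Nodes

variable {ι : Type*}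

def bernsteinNode {n : ℕ} (j : ι → Fin (n + 1)) : ι → ℝ := fun l => (j l : ℝ) / n

lemma bernsteinNode_mem_Icc {n : ℕ} (j : ι → Fin (n + 1)) (l : ι) :
    bernsteinNode j l ∈ Set.Icc (0 : ℝ) 1 :=
  ⟨by unfold bernsteinNode; positivity,
    div_le_one_of_le₀ (by exact_mod_cast Nat.lt_succ_iff.1 (j l).2) (Nat.cast_nonneg n)⟩

lemma bernsteinNode_add_single [DecidableEq ι] {n : ℕ} (j : ι → Fin (n + 1)) (i : ι)
    (hj : j i ≠ Fin.last n) :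
    bernsteinNode (j + Pi.single i 1) = bernsteinNode j + (n : ℝ)⁻¹ • Pi.single i 1 := by
  funext l
  rcases eq_or_ne l i with rfl | hl
  · simp [bernsteinNode, Fin.val_add_one, hj, add_div]
  · simp [bernsteinNode, hl]

lemma norm_le_one_of_forall_mem_Icc [Fintype ι] {x : ι → ℝ}
    (hx : ∀ l, x l ∈ Set.Icc (0 : ℝ) 1) : ‖x‖ ≤ 1 :=
  (pi_norm_le_iff_of_nonneg zero_le_one).2 fun l => by
    rw [Real.norm_of_nonneg (hx l).1]; exact (hx l).2

lemma dist_sq_le_sum_sq [Fintype ι] (y x : ι → ℝ) : dist y x ^ 2 ≤ ∑ l, (y l - x l) ^ 2 := by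
  have h : dist y x ≤ √(∑ l, (y l - x l) ^ 2) := by
    refine (dist_pi_le_iff (Real.sqrt_nonneg _)).2 fun l => ?_
    rw [Real.dist_eq, ← Real.sqrt_sq_eq_abs]
    exact Real.sqrt_le_sqrt (single_le_sum (fun l _ => sq_nonneg (y l - x l)) (mem_univ l))
  calc dist y x ^ 2 ≤ √(∑ l, (y l - x l) ^ 2) ^ 2 := pow_le_pow_left₀ dist_nonneg h 2
    _ = _ := Real.sq_sqrt (sum_nonneg fun _ _ => sq_nonneg _)

end Nodes

section Weights

variable {ι : Type*} [Fintype ι]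

/-- The product Bernstein weight of degrees `d`. The index `j` ranges over `ι → Fin (n + 1)` for
every `d ≤ n` (entries `j l > d l` get weight `0`), so that `Bₙ` and `∂ᵢBₙ`, which has degree
`n - 1` in coordinate `i`, are sums over the same nodes. -/
def bernsteinWeight {n : ℕ} (d : ι → ℕ) (x : ι → ℝ) (j : ι → Fin (n + 1)) : ℝ :=
  ∏ l, (bernsteinPolynomial ℝ (d l) (j l)).eval (x l)

lemma bernsteinWeight_nonneg {n : ℕ} (d : ι → ℕ) {x : ι → ℝ}
    (hx : ∀ l, x l ∈ Set.Icc (0 : ℝ) 1) (j : ι → Fin (n + 1)) : 0 ≤ bernsteinWeight d x j :=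
  prod_nonneg fun l _ => bernsteinPolynomial_eval_nonneg _ _ (hx l)

lemma bernsteinWeight_eq_mul_prod_erase [DecidableEq ι] {n : ℕ} (d : ι → ℕ) (x : ι → ℝ)
    (j : ι → Fin (n + 1)) (i : ι) :
    bernsteinWeight d x j = (bernsteinPolynomial ℝ (d i) (j i)).eval (x i) *
      ∏ l ∈ univ.erase i, (bernsteinPolynomial ℝ (d l) (j l)).eval (x l) :=
  (mul_prod_erase univ _ (mem_univ i)).symm

lemma sum_mul_prod_eq_of_sum_eq_one [DecidableEq ι] {α : Type*} [Fintype α] {p : ι → α → ℝ}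
    (hp : ∀ l, ∑ a, p l a = 1) (l₀ : ι) (φ : α → ℝ) :
    ∑ j : ι → α, φ (j l₀) * ∏ l, p l (j l) = ∑ a, φ a * p l₀ a := by
  have h := Fintype.prod_sum fun l a => (if l = l₀ then φ a else 1) * p l a
  rw [Fintype.prod_eq_single l₀ fun l hl => by simp [hl, hp]] at h
  simp only [prod_mul_distrib, Fintype.prod_ite_eq'] at h
  exact h.symm

lemma sum_bernsteinWeight [DecidableEq ι] {n : ℕ} {d : ι → ℕ} (hd : ∀ l, d l ≤ n) (x : ι → ℝ) :
    ∑ j : ι → Fin (n + 1), bernsteinWeight d x j = 1 := by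
  refine (Fintype.prod_sum fun l (a : Fin (n + 1)) =>
    (bernsteinPolynomial ℝ (d l) a).eval (x l)).symm.trans ?_
  exact prod_eq_one fun l _ => sum_fin_bernsteinPolynomial_eval (hd l) (x l)

lemma sum_dist_sq_mul_bernsteinWeight_le [DecidableEq ι] {n : ℕ} {d : ι → ℕ}
    (hd : ∀ l, d l ≤ n ∧ n ≤ d l + 1) (hn : 0 < n) {x : ι → ℝ}
    (hx : ∀ l, x l ∈ Set.Icc (0 : ℝ) 1) :
    ∑ j : ι → Fin (n + 1), dist (bernsteinNode j) x ^ 2 * bernsteinWeight d x j ≤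
      3 * Fintype.card ι / n := by
  calc ∑ j : ι → Fin (n + 1), dist (bernsteinNode j) x ^ 2 * bernsteinWeight d x j
      ≤ ∑ j : ι → Fin (n + 1), ∑ l, (bernsteinNode j l - x l) ^ 2 * bernsteinWeight d x j := by
        refine sum_le_sum fun j _ => ?_
        rw [← sum_mul]
        exact mul_le_mul_of_nonneg_right (dist_sq_le_sum_sq _ _) (bernsteinWeight_nonneg d hx j)
    _ = ∑ l, ∑ a : Fin (n + 1),
          ((a : ℝ) / n - x l) ^ 2 * (bernsteinPolynomial ℝ (d l) a).eval (x l) := by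
        simp only [bernsteinWeight]
        rw [sum_comm]
        exact sum_congr rfl fun l _ => sum_mul_prod_eq_of_sum_eq_one
          (p := fun l (a : Fin (n + 1)) => (bernsteinPolynomial ℝ (d l) a).eval (x l))
          (fun l => sum_fin_bernsteinPolynomial_eval (hd l).1 (x l)) l
          (fun a => ((a : ℝ) / n - x l) ^ 2)
    _ ≤ ∑ _l : ι, 3 / (n : ℝ) := sum_le_sum fun l _ =>
        sum_fin_sq_mul_bernsteinPolynomial_eval_le (hd l).1 (hd l).2 hn (hx l)
    _ = 3 * Fintype.card ι / n := by simp [mul_div_assoc, mul_comm]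

lemma sum_mul_derivative_bernsteinPolynomial_eval [DecidableEq ι] {n : ℕ} (i : ι)
    (c R : (ι → Fin (n + 1)) → ℝ) (hR : ∀ j, R (j + Pi.single i 1) = R j) (y : ℝ) :
    ∑ j, c j * (derivative (bernsteinPolynomial ℝ n (j i))).eval y * R j =
      ∑ j, n * (c (j + Pi.single i 1) - c j) *
        (bernsteinPolynomial ℝ (n - 1) (j i)).eval y * R j := by
  set s : ι → Fin (n + 1) := Pi.single i 1
  have hs : ∀ j : ι → Fin (n + 1), (j + s) i = j i + 1 := fun j => by simp [s]
  calc ∑ j, c j * (derivative (bernsteinPolynomial ℝ n (j i))).eval y * R j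
      = ∑ j, c (j + s) * (derivative (bernsteinPolynomial ℝ n ((j + s) i))).eval y *
          R (j + s) := (Equiv.sum_comp (Equiv.addRight s) _).symm
    _ = ∑ j, n * c (j + s) * (bernsteinPolynomial ℝ (n - 1) (j i)).eval y * R j -
          ∑ j, n * c (j + s) * (bernsteinPolynomial ℝ (n - 1) ((j + s) i)).eval y * R (j + s) := by
        rw [← sum_sub_distrib]
        refine sum_congr rfl fun j _ => ?_
        rw [hs, derivative_bernsteinPolynomial_eval_add_one, hR]
        ring
    _ = ∑ j, n * c (j + s) * (bernsteinPolynomial ℝ (n - 1) (j i)).eval y * R j -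
          ∑ j, n * c j * (bernsteinPolynomial ℝ (n - 1) (j i)).eval y * R j := by
        congr 1
        exact Equiv.sum_comp (Equiv.addRight s)
          (fun j => n * c j * (bernsteinPolynomial ℝ (n - 1) (j i)).eval y * R j)
    _ = _ := by
        rw [← sum_sub_distrib]
        exact sum_congr rfl fun j _ => by ring

end Weights

lemma abs_sum_mul_sub_le {κ : Type*} [Fintype κ] {w c φ : κ → ℝ} {a ε C : ℝ}
    (hw : ∀ j, 0 ≤ w j) (hw1 : ∑ j, w j = 1) (hc : ∀ j, |c j - a| ≤ ε + C * φ j) :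
    |∑ j, c j * w j - a| ≤ ε + C * ∑ j, φ j * w j := by
  calc |∑ j, c j * w j - a| = |∑ j, (c j - a) * w j| := by
        simp [sub_mul, sum_sub_distrib, ← mul_sum, hw1]
    _ ≤ ∑ j, |c j - a| * w j := by
        refine (abs_sum_le_sum_abs _ _).trans_eq (sum_congr rfl fun j _ => ?_)
        rw [abs_mul, abs_of_nonneg (hw j)]
    _ ≤ ∑ j, (ε + C * φ j) * w j := by gcongr with j; exact hw j; exact hc j
    _ = ε + C * ∑ j, φ j * w j := by
        simp only [add_mul, sum_add_distrib, mul_assoc, ← mul_sum, hw1, mul_one]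

lemma IsCompact.exists_abs_sub_le_add_mul_dist_sq {X : Type*} [PseudoMetricSpace X] {K : Set X}
    (hK : IsCompact K) {g : X → ℝ} (hg : ContinuousOn g K) {ε : ℝ} (hε : 0 < ε) :
    ∃ C, 0 ≤ C ∧ ∀ x ∈ K, ∀ y ∈ K, |g y - g x| ≤ ε + C * dist y x ^ 2 := by
  obtain ⟨δ, hδ, hδε⟩ := Metric.uniformContinuousOn_iff_le.1
    (hK.uniformContinuousOn_of_continuous hg) ε hε
  obtain ⟨M, hM⟩ := hK.exists_bound_of_continuousOn hg
  refine ⟨2 * max M 0 / δ ^ 2, by positivity, fun x hx y hy => ?_⟩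
  rcases le_or_gt (dist y x) δ with hxy | hxy
  · have := hδε y hy x hx hxy
    rw [Real.dist_eq] at this
    nlinarith [sq_nonneg (dist y x), show 0 ≤ 2 * max M 0 / δ ^ 2 by positivity]
  · calc |g y - g x| ≤ ‖g y‖ + ‖g x‖ := abs_sub _ _
      _ ≤ 2 * max M 0 := by linarith [hM y hy, hM x hx, le_max_left M 0]
      _ ≤ 2 * max M 0 / δ ^ 2 * dist y x ^ 2 := by
        rw [div_mul_eq_mul_div, le_div_iff₀ (by positivity)]
        gcongr
      _ ≤ ε + _ := le_add_of_nonneg_left hε.le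

lemma abs_sub_le_add_mul_dist_sq_of_dist_le {X : Type*} [PseudoMetricSpace X] {K : Set X}
    {g : X → ℝ} {ε C : ℝ} (hC0 : 0 ≤ C)
    (hC : ∀ x ∈ K, ∀ y ∈ K, |g y - g x| ≤ ε + C * dist y x ^ 2) {x y z : X} (hx : x ∈ K)
    (hy : y ∈ K) {r : ℝ} (hyz : dist y z ≤ r) :
    |g y - g x| ≤ (ε + 2 * C * r ^ 2) + 2 * C * dist z x ^ 2 := by
  have hsq : dist y x ^ 2 ≤ 2 * r ^ 2 + 2 * dist z x ^ 2 := by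
    have := (dist_triangle y z x).trans (add_le_add_left hyz _)
    nlinarith [sq_nonneg (r - dist z x), dist_nonneg (x := y) (y := x)]
  nlinarith [hC x hx y hy, mul_le_mul_of_nonneg_left hsq hC0]

theorem tendstoUniformlyOn_of_eventually_eq_sum_bernsteinWeight {ι : Type*} [Fintype ι]
    [DecidableEq ι] {g : (ι → ℝ) → ℝ} (hg : Continuous g) {F : ℕ → (ι → ℝ) → ℝ}
    (hF : ∀ᶠ n in atTop, ∃ (d : ι → ℕ) (ζ : (ι → Fin (n + 1)) → ι → ℝ),
      (∀ l, d l ≤ n ∧ n ≤ d l + 1) ∧ (∀ j, dist (ζ j) (bernsteinNode j) ≤ 1 / n) ∧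
      ∀ x ∈ Set.univ.pi fun _ => Set.Icc (0 : ℝ) 1, F n x = ∑ j, g (ζ j) * bernsteinWeight d x j) :
    TendstoUniformlyOn F g atTop (Set.univ.pi fun _ => Set.Icc 0 1) := by
  rw [Metric.tendstoUniformlyOn_iff]
  intro ε hε
  obtain ⟨C, hC0, hC⟩ := (isCompact_closedBall (0 : ι → ℝ) 2).exists_abs_sub_le_add_mul_dist_sq
    hg.continuousOn (half_pos hε)
  have hlim := tendsto_const_div_atTop_nhds_zero_nat (𝕜 := ℝ) (2 * C + 6 * C * Fintype.card ι)
  filter_upwards [hF, hlim.eventually (gt_mem_nhds (half_pos hε)), eventually_gt_atTop 0]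
    with n ⟨d, ζ, hd, hζ, hFn⟩ hsmall hn x hx
  have hx' : ∀ l, x l ∈ Set.Icc (0 : ℝ) 1 := Set.mem_univ_pi.1 hx
  have hn1 : (1 : ℝ) ≤ n := by exact_mod_cast hn
  have hxK : x ∈ Metric.closedBall 0 2 := by
    rw [mem_closedBall_zero_iff]; linarith [norm_le_one_of_forall_mem_Icc hx']
  have hterm : ∀ j, |g (ζ j) - g x| ≤
      (ε / 2 + 2 * C * (1 / n) ^ 2) + 2 * C * dist (bernsteinNode j) x ^ 2 := by
    intro j
    have hζK : ζ j ∈ Metric.closedBall 0 2 := by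
      rw [mem_closedBall_zero_iff, ← dist_zero_right]
      calc dist (ζ j) 0 ≤ dist (ζ j) (bernsteinNode j) + dist (bernsteinNode j) 0 :=
            dist_triangle ..
        _ ≤ 1 / n + 1 := add_le_add (hζ j) (by
            rw [dist_zero_right]; exact norm_le_one_of_forall_mem_Icc (bernsteinNode_mem_Icc j))
        _ ≤ 2 := by linarith [div_le_one_of_le₀ hn1 (by positivity : (0 : ℝ) ≤ n)]
    exact abs_sub_le_add_mul_dist_sq_of_dist_le hC0 hC hxK hζK (hζ j)
  rw [dist_comm, Real.dist_eq, hFn x hx]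
  calc |∑ j, g (ζ j) * bernsteinWeight d x j - g x|
      ≤ (ε / 2 + 2 * C * (1 / n) ^ 2) +
          2 * C * ∑ j, dist (bernsteinNode j) x ^ 2 * bernsteinWeight d x j :=
        abs_sum_mul_sub_le (bernsteinWeight_nonneg d hx')
          (sum_bernsteinWeight (fun l => (hd l).1) x) hterm
    _ ≤ (ε / 2 + 2 * C * (1 / n)) + 2 * C * (3 * Fintype.card ι / n) := by
        gcongr
        · exact pow_le_of_le_one (by positivity) (div_le_one_of_le₀ hn1 (by positivity))
            two_ne_zero
        · exact sum_dist_sq_mul_bernsteinWeight_le hd hn hx'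
    _ = ε / 2 + (2 * C + 6 * C * Fintype.card ι) / n := by ring
    _ < ε := by linarith

lemma bernsteinPoly_eq_sum (k : ℕ) (f : (Fin k → ℝ) → ℝ) (n : ℕ) :
    bernsteinPoly k f n = fun x =>
      ∑ j : Fin k → Fin (n + 1), f (bernsteinNode j) * bernsteinWeight (fun _ => n) x j := by
  funext x
  simp only [bernsteinPoly, bernsteinWeight, bernsteinPolynomial, eval_mul,
    eval_pow, eval_natCast, eval_X, eval_sub, eval_one]
  rfl

lemma hasDerivAt_bernsteinPoly_update (k : ℕ) (f : (Fin k → ℝ) → ℝ) (n : ℕ) (x : Fin k → ℝ)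
    (i : Fin k) :
    HasDerivAt (fun y => bernsteinPoly k f n (Function.update x i y))
      (∑ j : Fin k → Fin (n + 1), f (bernsteinNode j) *
        (derivative (bernsteinPolynomial ℝ n (j i))).eval (x i) *
          ∏ l ∈ univ.erase i, (bernsteinPolynomial ℝ n (j l)).eval (x l)) (x i) := by
  have hB : (fun y => bernsteinPoly k f n (Function.update x i y)) = fun y =>
      ∑ j : Fin k → Fin (n + 1), f (bernsteinNode j) * (bernsteinPolynomial ℝ n (j i)).eval y *
        ∏ l ∈ univ.erase i, (bernsteinPolynomial ℝ n (j l)).eval (x l) := by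
    funext y
    rw [bernsteinPoly_eq_sum]
    refine sum_congr rfl fun j _ => ?_
    rw [bernsteinWeight_eq_mul_prod_erase _ _ _ i, Function.update_self, mul_assoc]
    congr 2
    exact prod_congr rfl fun l hl => by rw [Function.update_of_ne (ne_of_mem_erase hl)]
  rw [hB]
  exact HasDerivAt.fun_sum fun j _ => ((Polynomial.hasDerivAt _ (x i)).const_mul _).mul_const _

theorem fderiv_bernsteinPoly_apply_single (k : ℕ) (f : (Fin k → ℝ) → ℝ) (n : ℕ)
    (x : Fin k → ℝ) (i : Fin k) :
    fderiv ℝ (bernsteinPoly k f n) x (Pi.single i 1) =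
      ∑ j : Fin k → Fin (n + 1), n * (f (bernsteinNode j + (n : ℝ)⁻¹ • Pi.single i 1) -
        f (bernsteinNode j)) * bernsteinWeight (Function.update (fun _ => n) i (n - 1)) x j := by
  set R : (Fin k → Fin (n + 1)) → ℝ := fun j =>
    ∏ l ∈ univ.erase i, (bernsteinPolynomial ℝ n (j l)).eval (x l)
  have hR : ∀ j, R (j + Pi.single i 1) = R j := fun j =>
    prod_congr rfl fun l hl => by simp [Pi.single_eq_of_ne (ne_of_mem_erase hl)]
  have hdiff : DifferentiableAt ℝ (bernsteinPoly k f n) x := by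
    rw [bernsteinPoly_eq_sum]; simp only [bernsteinWeight]; fun_prop
  have hcomp := hdiff.hasFDerivAt.comp_hasDerivAt_of_eq (x i) (hasDerivAt_update x i (x i))
    (Function.update_eq_self i x).symm
  rw [hcomp.unique (hasDerivAt_bernsteinPoly_update k f n x i),
    sum_mul_derivative_bernsteinPolynomial_eval i _ R hR]
  refine sum_congr rfl fun j _ => ?_
  have hprod : ∏ l ∈ univ.erase i,
      (bernsteinPolynomial ℝ (Function.update (fun _ => n) i (n - 1) l) (j l)).eval (x l) = R j :=
    prod_congr rfl fun l hl => by rw [Function.update_of_ne (ne_of_mem_erase hl)]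
  rw [bernsteinWeight_eq_mul_prod_erase _ _ _ i, Function.update_self, ← mul_assoc, hprod]
  congr 1
  by_cases hj : j i = Fin.last n
  -- the shift `j + Pi.single i 1` wraps around here, but the weight of degree `n - 1` vanishes
  · rw [hj, Fin.val_last, mul_right_comm, natCast_mul_bernsteinPolynomial_eval_pred_self,
      mul_right_comm, natCast_mul_bernsteinPolynomial_eval_pred_self, zero_mul, zero_mul]
  · rw [bernsteinNode_add_single j i hj]

lemma exists_mem_Ioo_sub_eq_mul_fderiv {E : Type*} [NormedAddCommGroup E] [NormedSpace ℝ E]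
    {f : E → ℝ} (hf : Differentiable ℝ f) (y v : E) {h : ℝ} (hh : 0 < h) :
    ∃ t ∈ Set.Ioo 0 h, f (y + h • v) - f y = h * fderiv ℝ f (y + t • v) v := by
  have hderiv : ∀ t : ℝ, HasDerivAt (fun t : ℝ => f (y + t • v)) (fderiv ℝ f (y + t • v) v) t :=
    fun t => (hf _).hasFDerivAt.comp_hasDerivAt t
      (by simpa using ((hasDerivAt_id t).smul_const v).const_add y)
  obtain ⟨t, ht, hslope⟩ := exists_hasDerivAt_eq_slope _ _ hh
    (HasDerivAt.continuousOn fun t _ => hderiv t) fun t _ => hderiv t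
  refine ⟨t, ht, ?_⟩
  rw [hslope, zero_smul, add_zero, sub_zero, mul_div_cancel₀ _ hh.ne']

theorem exists_fderiv_bernsteinPoly_apply_single_eq_sum {k : ℕ} {f : (Fin k → ℝ) → ℝ}
    (hf : Differentiable ℝ f) {n : ℕ} (hn : 0 < n) (i : Fin k) :
    ∃ ζ : (Fin k → Fin (n + 1)) → Fin k → ℝ, (∀ j, dist (ζ j) (bernsteinNode j) ≤ 1 / n) ∧
      ∀ x, fderiv ℝ (bernsteinPoly k f n) x (Pi.single i 1) =
        ∑ j, fderiv ℝ f (ζ j) (Pi.single i 1) *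
          bernsteinWeight (Function.update (fun _ => n) i (n - 1)) x j := by
  have hn' : (0 : ℝ) < (n : ℝ)⁻¹ := by positivity
  choose t ht hmvt using fun j : Fin k → Fin (n + 1) =>
    exists_mem_Ioo_sub_eq_mul_fderiv hf (bernsteinNode j) (Pi.single i 1) hn'
  refine ⟨fun j => bernsteinNode j + t j • Pi.single i 1, fun j => ?_, fun x => ?_⟩
  · rw [dist_self_add_left, norm_smul, Pi.norm_single, norm_one, mul_one,
      Real.norm_of_nonneg (ht j).1.le, one_div]
    exact (ht j).2.le
  · rw [fderiv_bernsteinPoly_apply_single]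
    refine sum_congr rfl fun j _ => ?_
    rw [hmvt j, ← mul_assoc, mul_inv_cancel₀ (by positivity), one_mul]

/-- For `f ∈ C¹(ℝ^k)`, the Bernstein polynomials `Bₙ(f;·)` converge
uniformly to `f` on `[0,1]^k`, and each partial derivative `∂ᵢBₙ(f;·)` converges
uniformly to `∂ᵢf` on `[0,1]^k`. -/
theorem stmt_13 (k : ℕ) (f : (Fin k → ℝ) → ℝ) (hf : ContDiff ℝ 1 f) :
    TendstoUniformlyOn (fun n => bernsteinPoly k f n) f Filter.atTop
      (Set.univ.pi fun _ => Set.Icc 0 1) ∧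
    ∀ i : Fin k, TendstoUniformlyOn
      (fun n x => fderiv ℝ (bernsteinPoly k f n) x (Pi.single i 1))
      (fun x => fderiv ℝ f x (Pi.single i 1)) Filter.atTop
      (Set.univ.pi fun _ => Set.Icc 0 1) := by
  refine ⟨tendstoUniformlyOn_of_eventually_eq_sum_bernsteinWeight hf.continuous
    (Eventually.of_forall fun n => ⟨fun _ => n, bernsteinNode, fun _ => ⟨le_rfl, n.le_succ⟩,
      fun j => by simp, fun x _ => by rw [bernsteinPoly_eq_sum]⟩), fun i => ?_⟩
  refine tendstoUniformlyOn_of_eventually_eq_sum_bernsteinWeight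
    ((hf.continuous_fderiv one_ne_zero).clm_apply continuous_const) ?_
  filter_upwards [eventually_gt_atTop 0] with n hn
  obtain ⟨ζ, hζ, hderiv⟩ :=
    exists_fderiv_bernsteinPoly_apply_single_eq_sum (hf.differentiable one_ne_zero) hn i
  refine ⟨_, ζ, fun l => ?_, hζ, fun x _ => hderiv x⟩
  rcases eq_or_ne l i with rfl | hl
  · simp only [Function.update_self]; omega
  · simp [Function.update_of_ne hl]

end
end

section
/- Let g, h ∈ L₂^↑. Then pr_g h ∈ L₂^↑; that is, the conditional expectation E(h | σ*(g)) on ([0,1], leb) of a non-decreasing function h, given the completed σ-algebra generated by a non-decreasing function g, has a non-decreasing version. -/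
open MeasureTheory Set Filter

noncomputable section

/-!
Write `φ(t)` for the mean of `h` over the fiber `g⁻¹{t}` when that fiber has positive measure.
There are only countably many such fibers, and on them `φ ∘ g` has the same integrals as `h`.
Since `g` is monotone, every other fiber meets `[0,1]` in at most one point, and `h` itself is
already a function of `g` there. Hence `φ ∘ g` is a version of `E(h | σ(g))`. It is monotone:
if `g x < g y`, then each point of the fiber of `g x` lies below each point of the fiber of `g y`,
so a single value `h p` lies between the two fiber means.
-/

open scoped ENNReal

namespace MeasureTheory

variable {α β : Type*} [MeasurableSpace α] {μ : Measure α} {s : Set α} {f : α → ℝ} {c : ℝ}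

theorem setAverage_le_of_ae_le (hμ₀ : μ s ≠ 0) (hμ : μ s ≠ ∞) (hf : IntegrableOn f s μ)
    (hle : ∀ᵐ x ∂μ.restrict s, f x ≤ c) : ⨍ x in s, f x ∂μ ≤ c := by
  have hpos : 0 < μ.real s := ENNReal.toReal_pos hμ₀ hμ
  rw [setAverage_eq, smul_eq_mul, inv_mul_le_iff₀ hpos]
  calc ∫ x in s, f x ∂μ ≤ ∫ _ in s, c ∂μ := integral_mono_ae hf (integrableOn_const hμ) hle
    _ = μ.real s * c := by rw [setIntegral_const, smul_eq_mul]

theorem le_setAverage_of_ae_le (hμ₀ : μ s ≠ 0) (hμ : μ s ≠ ∞) (hf : IntegrableOn f s μ)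
    (hle : ∀ᵐ x ∂μ.restrict s, c ≤ f x) : c ≤ ⨍ x in s, f x ∂μ := by
  have hpos : 0 < μ.real s := ENNReal.toReal_pos hμ₀ hμ
  rw [setAverage_eq, smul_eq_mul, le_inv_mul_iff₀ hpos]
  calc μ.real s * c = ∫ _ in s, c ∂μ := by rw [setIntegral_const, smul_eq_mul]
    _ ≤ ∫ x in s, f x ∂μ := integral_mono_ae (integrableOn_const hμ) hf hle

variable [MeasurableSpace β] [MeasurableSingletonClass β] {g : α → β}

theorem setIntegral_preimage_eq_tsum_fiber {S : Set β} (hS : S.Countable) (hg : Measurable g)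
    (hf : Integrable f μ) :
    ∫ x in g ⁻¹' S, f x ∂μ = ∑' t : S, ∫ x in g ⁻¹' {(t : β)}, f x ∂μ := by
  have : Countable S := hS.to_subtype
  have hS' : g ⁻¹' S = ⋃ t : S, g ⁻¹' {(t : β)} := by
    rw [← biUnion_preimage_singleton, biUnion_eq_iUnion]
  rw [hS', integral_iUnion (fun _ => hg (measurableSet_singleton _))
    (fun t t' htt' => (disjoint_singleton.mpr (Subtype.coe_injective.ne htt')).preimage g)
    hf.integrableOn]

theorem setIntegral_preimage_eq_of_fibers {F H : α → ℝ} {T : Set β} (hT : T.Countable)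
    (hg : Measurable g) (hF : Integrable F μ) (hH : Integrable H μ)
    (hfiber : ∀ t ∈ T, ∫ x in g ⁻¹' {t}, F x ∂μ = ∫ x in g ⁻¹' {t}, H x ∂μ)
    (hoff : ∀ᵐ x ∂μ, g x ∉ T → F x = H x) {B : Set β} (hB : MeasurableSet B) :
    ∫ x in g ⁻¹' B, F x ∂μ = ∫ x in g ⁻¹' B, H x ∂μ := by
  have hBT : (B ∩ T).Countable := hT.mono inter_subset_right
  have hmT : MeasurableSet (g ⁻¹' T) := hg hT.measurableSet
  have hatoms : ∫ x in g ⁻¹' (B ∩ T), F x ∂μ = ∫ x in g ⁻¹' (B ∩ T), H x ∂μ := by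
    rw [setIntegral_preimage_eq_tsum_fiber hBT hg hF, setIntegral_preimage_eq_tsum_fiber hBT hg hH]
    exact tsum_congr fun t => hfiber t t.2.2
  have hrest : ∫ x in g ⁻¹' B \ g ⁻¹' T, F x ∂μ = ∫ x in g ⁻¹' B \ g ⁻¹' T, H x ∂μ :=
    setIntegral_congr_ae ((hg hB).diff hmT) (hoff.mono fun x hx hxBT => hx hxBT.2)
  rw [← integral_inter_add_sdiff hmT hF.integrableOn,
    ← integral_inter_add_sdiff hmT hH.integrableOn]
  exact congrArg₂ (· + ·) hatoms hrest

end MeasureTheory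

instance inst_s15 : IsFiniteMeasure leb := by
  unfold leb
  infer_instance

theorem ae_mem_Icc_leb : ∀ᵐ x ∂leb, x ∈ Icc (0:ℝ) 1 :=
  ae_restrict_mem measurableSet_Icc

theorem MonotoneOn.integrable_leb {f : ℝ → ℝ} (hf : MonotoneOn f (Icc 0 1)) : Integrable f leb :=
  hf.integrableOn_isCompact isCompact_Icc

namespace MonotoneCondExp

variable {g h : ℝ → ℝ} {t x z w : ℝ}

theorem eq_of_fiber_null (hg : MonotoneOn g (Icc 0 1)) (h0 : leb (g ⁻¹' {g x}) = 0)
    (hx : x ∈ Icc (0:ℝ) 1) (hz : z ∈ Icc (0:ℝ) 1) (hgz : g z = g x) : z = x := by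
  have key : ∀ a ∈ Icc (0:ℝ) 1, ∀ b ∈ Icc (0:ℝ) 1, g a = g x → g b = g x → b ≤ a := by
    intro a ha b hb hga hgb
    by_contra! hab
    have hIoo : Ioo a b ⊆ Icc 0 1 := Ioo_subset_Icc_self.trans (Icc_subset_Icc ha.1 hb.2)
    have hfiber : Ioo a b ⊆ g ⁻¹' {g x} := fun w hw =>
      le_antisymm (hgb ▸ hg (hIoo hw) hb hw.2.le) (hga ▸ hg ha (hIoo hw) hw.1.le)
    have hnull : volume (Ioo a b) = 0 := by
      rw [← Measure.restrict_eq_self volume hIoo]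
      exact measure_mono_null hfiber h0
    rw [Real.volume_Ioo, ENNReal.ofReal_eq_zero] at hnull
    linarith
  exact le_antisymm (key x hx z hz rfl hgz) (key z hz x hx hgz rfl)

def genInv (g : ℝ → ℝ) (t : ℝ) : ℝ :=
  sInf (insert 1 {x ∈ Icc (0:ℝ) 1 | t ≤ g x})

theorem bddBelow_genInv_set (g : ℝ → ℝ) (t : ℝ) :
    BddBelow (insert 1 {x ∈ Icc (0:ℝ) 1 | t ≤ g x}) :=
  ⟨0, by rintro x (rfl | hx); exacts [zero_le_one, hx.1.1]⟩

theorem genInv_le (hw : w ∈ Icc (0:ℝ) 1) (ht : t ≤ g w) : genInv g t ≤ w :=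
  csInf_le (bddBelow_genInv_set g t) (Or.inr ⟨hw, ht⟩)

theorem le_genInv (hz : z ≤ 1) (h : ∀ w ∈ Icc (0:ℝ) 1, t ≤ g w → z ≤ w) : z ≤ genInv g t :=
  le_csInf (insert_nonempty _ _) (by rintro w (rfl | hw); exacts [hz, h w hw.1 hw.2])

theorem genInv_mem_Icc (g : ℝ → ℝ) (t : ℝ) : genInv g t ∈ Icc (0:ℝ) 1 :=
  ⟨le_genInv zero_le_one fun _ hw _ => hw.1, csInf_le (bddBelow_genInv_set g t) (mem_insert _ _)⟩

theorem monotone_genInv (g : ℝ → ℝ) : Monotone (genInv g) := fun _ _ hst =>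
  csInf_le_csInf (bddBelow_genInv_set g _) (insert_nonempty _ _)
    (insert_subset_insert fun _ hx => ⟨hx.1, hst.trans hx.2⟩)

theorem le_genInv_of_lt (hg : MonotoneOn g (Icc 0 1)) (hz : z ∈ Icc (0:ℝ) 1) (hzt : g z < t) :
    z ≤ genInv g t :=
  le_genInv hz.2 fun _ hw htw => (hg.reflect_lt hz hw (hzt.trans_le htw)).le

theorem genInv_apply_of_fiber_null (hg : MonotoneOn g (Icc 0 1)) (hx : x ∈ Icc (0:ℝ) 1)
    (h0 : leb (g ⁻¹' {g x}) = 0) : genInv g (g x) = x := by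
  refine le_antisymm (genInv_le hx le_rfl) (le_genInv hx.2 fun w hw hxw => ?_)
  by_contra! hwx
  exact hwx.ne (eq_of_fiber_null hg h0 hx hw (le_antisymm (hg hw hx hwx.le) hxw))

/-- The function `φ` with `E(h | σ(g)) = φ ∘ g`. A null fiber `g⁻¹{t}` meets `[0,1]` in at most
the point `genInv g t`, where `φ` takes the value of `h`. -/
def fiberMean (g h : ℝ → ℝ) (t : ℝ) : ℝ :=
  if 0 < leb (g ⁻¹' {t}) then ⨍ x in g ⁻¹' {t}, h x ∂leb else h (genInv g t)

theorem fiberMean_comp_of_fiber_null (hg : MonotoneOn g (Icc 0 1)) (hx : x ∈ Icc (0:ℝ) 1)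
    (h0 : ¬ 0 < leb (g ⁻¹' {g x})) : fiberMean g h (g x) = h x := by
  rw [fiberMean, if_neg h0,
    genInv_apply_of_fiber_null hg hx (nonpos_iff_eq_zero.mp (not_lt.mp h0))]

theorem fiberMean_le (hg : MonotoneOn g (Icc 0 1)) (hgm : Measurable g)
    (hh : MonotoneOn h (Icc 0 1)) (hx : x ∈ Icc (0:ℝ) 1) {p : ℝ} (hp : p ∈ Icc (0:ℝ) 1)
    (hub : ∀ z ∈ Icc (0:ℝ) 1, g z = g x → z ≤ p) : fiberMean g h (g x) ≤ h p := by
  by_cases hpos : 0 < leb (g ⁻¹' {g x})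
  · rw [fiberMean, if_pos hpos]
    refine setAverage_le_of_ae_le hpos.ne' (measure_ne_top _ _) hh.integrable_leb.integrableOn ?_
    filter_upwards [ae_restrict_mem (hgm (measurableSet_singleton (g x))),
      ae_restrict_of_ae ae_mem_Icc_leb] with z hz hz01
    exact hh hz01 hp (hub z hz01 hz)
  · rw [fiberMean_comp_of_fiber_null hg hx hpos]
    exact hh hx hp (hub x hx rfl)

theorem le_fiberMean (hg : MonotoneOn g (Icc 0 1)) (hgm : Measurable g)
    (hh : MonotoneOn h (Icc 0 1)) (hx : x ∈ Icc (0:ℝ) 1) {p : ℝ} (hp : p ∈ Icc (0:ℝ) 1)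
    (hlb : ∀ z ∈ Icc (0:ℝ) 1, g z = g x → p ≤ z) : h p ≤ fiberMean g h (g x) := by
  by_cases hpos : 0 < leb (g ⁻¹' {g x})
  · rw [fiberMean, if_pos hpos]
    refine le_setAverage_of_ae_le hpos.ne' (measure_ne_top _ _) hh.integrable_leb.integrableOn ?_
    filter_upwards [ae_restrict_mem (hgm (measurableSet_singleton (g x))),
      ae_restrict_of_ae ae_mem_Icc_leb] with z hz hz01
    exact hh hp hz01 (hlb z hz01 hz)
  · rw [fiberMean_comp_of_fiber_null hg hx hpos]
    exact hh hp hx (hlb x hx rfl)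

theorem monotoneOn_fiberMean_comp (hg : MonotoneOn g (Icc 0 1)) (hgm : Measurable g)
    (hh : MonotoneOn h (Icc 0 1)) : MonotoneOn (fun x => fiberMean g h (g x)) (Icc 0 1) := by
  intro x hx y hy hxy
  rcases (hg hx hy hxy).eq_or_lt with heq | hlt
  · exact (congrArg (fiberMean g h) heq).le
  · calc fiberMean g h (g x) ≤ h (genInv g (g y)) :=
          fiberMean_le hg hgm hh hx (genInv_mem_Icc g _) fun z hz hzx =>
            le_genInv_of_lt hg hz (hzx ▸ hlt)
      _ ≤ fiberMean g h (g y) :=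
          le_fiberMean hg hgm hh hy (genInv_mem_Icc g _) fun _ hw hwy => genInv_le hw hwy.ge

/-- `fiberMean g h` agrees with the monotone function `h ∘ genInv g` off the countably many
fibers of positive measure. -/
theorem measurable_fiberMean (hgm : Measurable g) (hh : MonotoneOn h (Icc 0 1)) :
    Measurable (fiberMean g h) := by
  have hT := Measure.countable_meas_level_set_pos (μ := leb) hgm
  have := hT.to_subtype
  have hmono : Monotone fun t => h (genInv g t) := fun _ _ hst =>
    hh (genInv_mem_Icc g _) (genInv_mem_Icc g _) (monotone_genInv g hst)
  refine measurable_of_restrict_of_restrict_compl hT.measurableSet (measurable_of_countable _) ?_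
  convert hmono.measurable.comp measurable_subtype_coe using 1
  ext ⟨t, ht⟩
  exact if_neg ht

theorem setIntegral_fiber_fiberMean_comp (hgm : Measurable g) (hpos : 0 < leb (g ⁻¹' {t})) :
    ∫ x in g ⁻¹' {t}, fiberMean g h (g x) ∂leb = ∫ x in g ⁻¹' {t}, h x ∂leb := by
  have hconst : EqOn (fun x => fiberMean g h (g x)) (fun _ => ⨍ y in g ⁻¹' {t}, h y ∂leb)
      (g ⁻¹' {t}) := fun x hx => by
    simp only [mem_preimage, mem_singleton_iff] at hx
    simp only [hx, fiberMean, if_pos hpos]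
  rw [setIntegral_congr_fun (hgm (measurableSet_singleton t)) hconst, setIntegral_const,
    measure_smul_setAverage _ (measure_ne_top _ _)]

theorem fiberMean_comp_ae_eq_condExp (hg : MonotoneOn g (Icc 0 1)) (hgm : Measurable g)
    (hh : MonotoneOn h (Icc 0 1)) :
    (fun x => fiberMean g h (g x)) =ᵐ[leb] leb[h | MeasurableSpace.comap g (borel ℝ)] := by
  have hint : Integrable (fun x => fiberMean g h (g x)) leb :=
    (monotoneOn_fiberMean_comp hg hgm hh).integrable_leb
  refine ae_eq_condExp_of_forall_setIntegral_eq (measurable_iff_comap_le.mp hgm)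
    hh.integrable_leb (fun _ _ _ => hint.integrableOn) ?_
    ((measurable_fiberMean hgm hh).comp (Measurable.of_comap_le le_rfl)).aestronglyMeasurable
  rintro _ ⟨B, hB, rfl⟩ -
  refine setIntegral_preimage_eq_of_fibers (Measure.countable_meas_level_set_pos hgm) hgm hint
    hh.integrable_leb (fun t ht => setIntegral_fiber_fiberMean_comp hgm ht) ?_ hB
  filter_upwards [ae_mem_Icc_leb] with x hx hnull
  exact fiberMean_comp_of_fiber_null hg hx hnull

end MonotoneCondExp

theorem stmt_15_general (g h : ℝ → ℝ) (hg : MonotoneOn g (Set.Icc 0 1)) (hgm : Measurable g)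
    (hh : MonotoneOn h (Set.Icc 0 1)) :
    ∃ f : ℝ → ℝ, MonotoneOn f (Set.Icc 0 1) ∧
      leb[h | MeasurableSpace.comap g (borel ℝ)] =ᵐ[leb] f :=
  ⟨_, MonotoneCondExp.monotoneOn_fiberMean_comp hg hgm hh,
    (MonotoneCondExp.fiberMean_comp_ae_eq_condExp hg hgm hh).symm⟩

/-- **Remark 2.3 (iii).** For `g, h ∈ L₂^↑`, the conditional
expectation `pr_g h = E(h | σ(g))` on `([0,1], leb)` has a non-decreasing version. -/
theorem stmt_15 (g h : ℝ → ℝ) (hg : MonotoneOn g (Set.Icc 0 1)) (hgm : Measurable g)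
    (hh : MonotoneOn h (Set.Icc 0 1)) (hh2 : MemLp h 2 leb) :
    ∃ f : ℝ → ℝ, MonotoneOn f (Set.Icc 0 1) ∧
      leb[h | MeasurableSpace.comap g (borel ℝ)] =ᵐ[leb] f :=
  stmt_15_general g h hg hgm hh

end
end

section
/- Let n ≥ 1, s ∈ [1,2], let 0 = q₀ < q₁ < … < q_{n−1} < qₙ = 1, and let h : [0,1] → ℝ be measurable with ∫₀¹ |h|^s dleb ≤ 1. Then Σ_{i=1}^n (1/(qᵢ − q_{i−1}))·(∫_{[q_{i−1}, qᵢ)} h dleb)² ≤ Σ_{i=1}^n (qᵢ − q_{i−1})^{1 − 2/s}. (The left-hand side equals ‖pr_g h‖₂², the squared L₂-norm of the conditional expectation of h given the σ-algebra generated by the intervals [q_{i−1}, qᵢ), i.e. given any step function g with jump points exactly q₁,…,q_{n−1}.) -/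
open MeasureTheory Set

noncomputable section

/-
Each summand is bounded separately. On a cell `I` of length `d`, Hölder's inequality gives
`|∫_I h| ≤ ‖h‖_{L¹(I)} ≤ ‖h‖_{L^s(I)} · d^{1 - 1/s} ≤ d^{1 - 1/s}`, and then
`(1/d) (∫_I h)² ≤ d^{-1} · d^{2 - 2/s} = d^{1 - 2/s}`.
-/

section Holder

variable {α E : Type*} [MeasurableSpace α] [NormedAddCommGroup E] [NormedSpace ℝ E]
  {μ : Measure α} {p : ℝ} {f : α → E}

theorem enorm_integral_le_measure_univ_rpow (hp : 1 ≤ p) (hf : AEStronglyMeasurable f μ)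
    (hfp : ∫⁻ x, ‖f x‖ₑ ^ p ∂μ ≤ 1) :
    ‖∫ x, f x ∂μ‖ₑ ≤ μ univ ^ (1 - 1 / p) := by
  have hp0 : 0 < p := one_pos.trans_le hp
  have hLp : eLpNorm f (ENNReal.ofReal p) μ ≤ 1 := by
    rw [eLpNorm_eq_lintegral_rpow_enorm_toReal (by simpa using hp0) ENNReal.ofReal_ne_top,
      ENNReal.toReal_ofReal hp0.le]
    exact ENNReal.rpow_le_one hfp (by positivity)
  have hexp : 1 / (1 : ENNReal).toReal - 1 / (ENNReal.ofReal p).toReal = 1 - 1 / p := by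
    simp [ENNReal.toReal_ofReal hp0.le]
  calc ‖∫ x, f x ∂μ‖ₑ ≤ eLpNorm f 1 μ := by
        rw [eLpNorm_one_eq_lintegral_enorm]; exact enorm_integral_le_lintegral_enorm f
    _ ≤ eLpNorm f (ENNReal.ofReal p) μ * μ univ ^ (1 - 1 / p) := by
        rw [← hexp]
        exact eLpNorm_le_eLpNorm_mul_rpow_measure_univ (by simpa using hp) hf
    _ ≤ μ univ ^ (1 - 1 / p) := by
        exact mul_le_of_le_one_left' hLp

end Holder

theorem rpow_sq_div_self {d : ℝ} (hd : 0 < d) (p : ℝ) :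
    (d ^ (1 - 1 / p)) ^ 2 / d = d ^ (1 - 2 / p) := by
  rw [← Real.rpow_natCast, ← Real.rpow_mul hd.le, ← Real.rpow_sub_one hd.ne']
  ring_nf

theorem one_div_mul_sq_setIntegral_le {α : Type*} [MeasurableSpace α] {μ : Measure α}
    {S : Set α} {p d : ℝ} (hp : 1 ≤ p) (hd : 0 < d) (hS : μ S ≤ ENNReal.ofReal d)
    {f : α → ℝ} (hf : AEStronglyMeasurable f (μ.restrict S))
    (hfp : ∫⁻ x in S, ‖f x‖ₑ ^ p ∂μ ≤ 1) :
    1 / d * (∫ x in S, f x ∂μ) ^ 2 ≤ d ^ (1 - 2 / p) := by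
  have hexp : 0 ≤ 1 - 1 / p := sub_nonneg.mpr ((div_le_one (one_pos.trans_le hp)).mpr hp)
  have hint : |∫ x in S, f x ∂μ| ≤ d ^ (1 - 1 / p) := by
    rw [← Real.norm_eq_abs, ← ENNReal.ofReal_le_ofReal_iff (by positivity), ofReal_norm,
      ← ENNReal.ofReal_rpow_of_pos hd]
    calc ‖∫ x in S, f x ∂μ‖ₑ ≤ μ.restrict S univ ^ (1 - 1 / p) :=
          enorm_integral_le_measure_univ_rpow hp hf hfp
      _ ≤ ENNReal.ofReal d ^ (1 - 1 / p) := by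
          rw [Measure.restrict_apply_univ]; gcongr
  calc 1 / d * (∫ x in S, f x ∂μ) ^ 2 ≤ 1 / d * (d ^ (1 - 1 / p)) ^ 2 := by
        rw [← sq_abs (∫ x in S, f x ∂μ)]; gcongr
    _ = d ^ (1 - 2 / p) := by rw [one_div_mul_eq_div, rpow_sq_div_self hd]

theorem stmt_18_general (n : ℕ) (s : ℝ) (hs : s ∈ Set.Icc (1:ℝ) 2)
    (q : Fin (n + 1) → ℝ)
    (hmono : StrictMono q)
    (h : ℝ → ℝ) (hmeas : Measurable h)
    (hnorm : ∫⁻ t, ENNReal.ofReal |h t| ^ s ∂leb ≤ 1) :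
    ∑ i : Fin n, (1 / (q i.succ - q i.castSucc)) *
        (∫ t in Set.Ico (q i.castSucc) (q i.succ), h t ∂leb) ^ 2 ≤
      ∑ i : Fin n, (q i.succ - q i.castSucc) ^ (1 - 2 / s) := by
  refine Finset.sum_le_sum fun i _ => one_div_mul_sq_setIntegral_le hs.1
    (sub_pos.mpr (hmono i.castSucc_lt_succ)) ?_ hmeas.aestronglyMeasurable ?_
  · calc leb (Ico (q i.castSucc) (q i.succ)) ≤ volume (Ico (q i.castSucc) (q i.succ)) :=
          Measure.restrict_apply_le _ _
      _ = _ := Real.volume_Ico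
  · simp_rw [Real.enorm_eq_ofReal_abs]
    exact (setLIntegral_le_lintegral _ _).trans hnorm

/-- If `‖h‖_s ≤ 1` (`s ∈ [1,2]`), then for any partition
`0 = q₀ < … < qₙ = 1`, the squared `L₂`-norm of the conditional expectation of `h`
given the partition, `Σᵢ (1/(qᵢ−q_{i−1})) (∫_{[q_{i−1},qᵢ)} h)²`, is at most
`Σᵢ (qᵢ−q_{i−1})^{1−2/s}`. -/
theorem stmt_18 (n : ℕ) (hn : 1 ≤ n) (s : ℝ) (hs : s ∈ Set.Icc (1:ℝ) 2)
    (q : Fin (n + 1) → ℝ) (hq0 : q 0 = 0) (hq1 : q (Fin.last n) = 1)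
    (hmono : StrictMono q)
    (h : ℝ → ℝ) (hmeas : Measurable h)
    (hnorm : ∫⁻ t, ENNReal.ofReal |h t| ^ s ∂leb ≤ 1) :
    ∑ i : Fin n, (1 / (q i.succ - q i.castSucc)) *
        (∫ t in Set.Ico (q i.castSucc) (q i.succ), h t ∂leb) ^ 2 ≤
      ∑ i : Fin n, (q i.succ - q i.castSucc) ^ (1 - 2 / s) :=
  stmt_18_general n s hs q hmono h hmeas hnorm

end
end

section
/- Let ξ ∈ D^↑ be bounded with Lebesgue–Stieltjes measure μ_ξ, let 0 ≤ a < b ≤ 1 and r ∈ [a,b). Then ∫_{(a,b]} ((b−t)/(b−a))·1_{(r,b]}(t) μ_ξ(dt) − ∫_{(a,b]} ((t−a)/(b−a))·1_{(a,r]}(t) μ_ξ(dt) = (1/(b−a))·∫_a^b ξ(u) du − ξ(r). -/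
/-!
Both integrals are integrations by parts against Lebesgue measure: by Tonelli on the triangle
`{c < t ≤ u ≤ d}`, `∫_{(c,d]} (d - t) dμ_ξ = ∫_c^d (ξ u - ξ c) du`, and writing
`t - c = (d - c) - (d - t)` gives `∫_{(c,d]} (t - c) dμ_ξ = ∫_c^d (ξ d - ξ u) du`.
Applied on `(r,b]` and `(a,r]`, the two right-hand sides add up to `∫_a^b (ξ u - ξ r) du`.
-/

open MeasureTheory Set

lemma lintegral_Ioc_ofReal_sub_eq_lintegral_measure_Ioc (μ : Measure ℝ) [SFinite μ] (c d : ℝ) :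
    ∫⁻ t in Ioc c d, ENNReal.ofReal (d - t) ∂μ = ∫⁻ u in Ioc c d, μ (Ioc c u) := by
  have hS : MeasurableSet {p : ℝ × ℝ | p.1 ≤ p.2} := measurableSet_le measurable_fst measurable_snd
  -- both sides are the `μ ⊗ volume`-measure of `{t ≤ u}` inside `(c,d]²`, sliced two ways
  calc ∫⁻ t in Ioc c d, ENNReal.ofReal (d - t) ∂μ
      = ∫⁻ t in Ioc c d, volume.restrict (Ioc c d) (Prod.mk t ⁻¹' {p | p.1 ≤ p.2}) ∂μ := by
        refine setLIntegral_congr_fun measurableSet_Ioc fun t ht => ?_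
        change _ = volume.restrict (Ioc c d) (Ici t)
        have : Ici t ∩ Ioc c d = Icc t d := by
          ext x; simp only [mem_inter_iff, mem_Ici, mem_Ioc, mem_Icc]; grind
        rw [Measure.restrict_apply measurableSet_Ici, this, Real.volume_Icc]
    _ = ∫⁻ u in Ioc c d, μ.restrict (Ioc c d) ((·, u) ⁻¹' {p | p.1 ≤ p.2}) :=
        (Measure.prod_apply hS).symm.trans (Measure.prod_apply_symm hS)
    _ = ∫⁻ u in Ioc c d, μ (Ioc c u) := by
        refine setLIntegral_congr_fun measurableSet_Ioc fun u hu => ?_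
        change μ.restrict (Ioc c d) (Iic u) = _
        have : Iic u ∩ Ioc c d = Ioc c u := by
          ext x; simp only [mem_inter_iff, mem_Iic, mem_Ioc]; grind
        rw [Measure.restrict_apply measurableSet_Iic, this]

namespace StieltjesFunction

variable (ξ : StieltjesFunction ℝ) {c d : ℝ}

theorem integral_Ioc_sub_eq_intervalIntegral (hcd : c ≤ d) :
    ∫ t in Ioc c d, (d - t) ∂ξ.measure = ∫ u in c..d, (ξ u - ξ c) := by
  rw [intervalIntegral.integral_of_le hcd,
    integral_eq_lintegral_of_nonneg_ae
      ((ae_restrict_iff' measurableSet_Ioc).2 (ae_of_all _ fun t ht => sub_nonneg.2 ht.2))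
      (by fun_prop),
    integral_eq_lintegral_of_nonneg_ae
      ((ae_restrict_iff' measurableSet_Ioc).2
        (ae_of_all _ fun u hu => sub_nonneg.2 (ξ.mono hu.1.le)))
      (ξ.mono.measurable.sub measurable_const).aestronglyMeasurable,
    lintegral_Ioc_ofReal_sub_eq_lintegral_measure_Ioc]
  simp_rw [ξ.measure_Ioc]

theorem integral_Ioc_sub_left_eq_intervalIntegral (hcd : c ≤ d) :
    ∫ t in Ioc c d, (t - c) ∂ξ.measure = ∫ u in c..d, (ξ d - ξ u) := by
  have hlin : (fun t ↦ t - c) = fun t ↦ (d - c) - (d - t) := by ext; ring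
  have hξlin : (fun u ↦ ξ d - ξ u) = fun u ↦ (ξ d - ξ c) - (ξ u - ξ c) := by ext; ring
  rw [hlin, hξlin, integral_sub ?_ ?_, setIntegral_const,
    intervalIntegral.integral_sub intervalIntegrable_const ?_, intervalIntegral.integral_const,
    ξ.integral_Ioc_sub_eq_intervalIntegral hcd, measureReal_def, ξ.measure_Ioc,
    ENNReal.toReal_ofReal (sub_nonneg.2 (ξ.mono hcd)), smul_eq_mul, smul_eq_mul, mul_comm]
  · exact ξ.mono.intervalIntegrable.sub intervalIntegrable_const
  · exact integrableOn_const measure_Ioc_lt_top.ne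
  · exact (continuous_sub_left d).integrableOn_Ioc

end StieltjesFunction

lemma setIntegral_mul_indicator_one {α : Type*} [MeasurableSpace α] {μ : Measure α}
    {s t : Set α} (ht : MeasurableSet t) (hts : t ⊆ s) (f : α → ℝ) :
    ∫ x in s, f x * t.indicator (fun _ ↦ (1 : ℝ)) x ∂μ = ∫ x in t, f x ∂μ := by
  simp_rw [← indicator_mul_right, mul_one]
  rw [integral_indicator ht, Measure.restrict_restrict ht, inter_eq_left.2 hts]

theorem stmt_19_general (ξ : StieltjesFunction ℝ)
    (a b r : ℝ) (hab : a < b) (hr : r ∈ Set.Ico a b) :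
    (∫ t in Set.Ioc a b,
        ((b - t) / (b - a)) * Set.indicator (Set.Ioc r b) (fun _ => (1:ℝ)) t ∂ξ.measure)
    - (∫ t in Set.Ioc a b,
        ((t - a) / (b - a)) * Set.indicator (Set.Ioc a r) (fun _ => (1:ℝ)) t ∂ξ.measure)
    = (1 / (b - a)) * (∫ u in a..b, ξ u) - ξ r := by
  obtain ⟨har, hrb⟩ := hr
  rw [setIntegral_mul_indicator_one measurableSet_Ioc (Ioc_subset_Ioc_left har),
    setIntegral_mul_indicator_one measurableSet_Ioc (Ioc_subset_Ioc_right hrb.le),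
    integral_div, integral_div, ξ.integral_Ioc_sub_eq_intervalIntegral hrb.le,
    ξ.integral_Ioc_sub_left_eq_intervalIntegral har]
  have hint (c d : ℝ) : IntervalIntegrable (fun u ↦ ξ u - ξ r) volume c d :=
    ξ.mono.intervalIntegrable.sub intervalIntegrable_const
  have hsum : (∫ u in a..r, (ξ u - ξ r)) + ∫ u in r..b, (ξ u - ξ r)
      = (∫ u in a..b, ξ u) - (b - a) * ξ r := by
    rw [intervalIntegral.integral_add_adjacent_intervals (hint a r) (hint r b),
      intervalIntegral.integral_sub ξ.mono.intervalIntegrable intervalIntegrable_const,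
      intervalIntegral.integral_const, smul_eq_mul]
  have hneg : ∫ u in a..r, (ξ r - ξ u) = -∫ u in a..r, (ξ u - ξ r) := by
    rw [← intervalIntegral.integral_neg]; simp_rw [neg_sub]
  rw [hneg]
  field_simp [(sub_pos.2 hab).ne']
  linarith

/-- For a bounded `ξ ∈ D^↑` with Lebesgue–Stieltjes measure `μ_ξ`,
`0 ≤ a < b ≤ 1` and `r ∈ [a,b)`:
`∫_{(a,b]} ((b−t)/(b−a)) 1_{(r,b]}(t) μ_ξ(dt) − ∫_{(a,b]} ((t−a)/(b−a)) 1_{(a,r]}(t) μ_ξ(dt)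
  = (1/(b−a)) ∫_a^b ξ(u) du − ξ(r)`. -/
theorem stmt_19 (ξ : StieltjesFunction ℝ)
    (hξ0 : ∀ x ≤ (0:ℝ), ξ x = ξ 0) (hξ1 : ∀ x, (1:ℝ) ≤ x → ξ x = ξ 1)
    (hξc : ContinuousAt ξ 1)
    (a b r : ℝ) (ha : 0 ≤ a) (hab : a < b) (hb : b ≤ 1) (hr : r ∈ Set.Ico a b) :
    (∫ t in Set.Ioc a b,
        ((b - t) / (b - a)) * Set.indicator (Set.Ioc r b) (fun _ => (1:ℝ)) t ∂ξ.measure)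
    - (∫ t in Set.Ioc a b,
        ((t - a) / (b - a)) * Set.indicator (Set.Ioc a r) (fun _ => (1:ℝ)) t ∂ξ.measure)
    = (1 / (b - a)) * (∫ u in a..b, ξ u) - ξ r :=
  stmt_19_general ξ a b r hab hr
end
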